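/- arXiv:2212.14000 — 9 statements merged into one kernel-verified Lean document; each statement's English description precedes it below -/
import Mathlib

section
/- Let p be a preposet on a finite set I and let i₁, i₂ ∈ I be distinct. Then the coroot h_{i₁i₂} = e_{i₁} − e_{i₂} belongs to the cone σ°_p if and only if (i₂,i₁) ∈ p. Equivalently, the intersection of σ°_p with the set of all coroots {h_{i₁i₂} : i₁,i₂ ∈ I, i₁ ≠ i₂} equals {h_{i₁i₂} : (i₂,i₁) ∈ p}. -/
/-- A preposet on `I`, identified with its set of ordered pairs of distinct related
elements: `(a, b) ∈ P` means `a ≠ b` and `a ≥_p b`. -/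
def IsPreposet {I : Type*} (P : Set (I × I)) : Prop :=
  (∀ x ∈ P, x.1 ≠ x.2) ∧
    ∀ a b c : I, (a, b) ∈ P → (b, c) ∈ P → a ≠ c → (a, c) ∈ P

/-- The coroot `h_{a b} = e_a - e_b` in `ℝ^I`. -/
def corootVec {I : Type*} [DecidableEq I] (a b : I) : I → ℝ := fun i =>
  (if i = a then (1 : ℝ) else 0) - (if i = b then (1 : ℝ) else 0)

/-- The set of all finite nonnegative real linear combinations of elements of `S`
(the conical hull, containing `0`). -/
def conicalHull {I : Type*} (S : Set (I → ℝ)) : Set (I → ℝ) :=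
  {x | ∃ (n : ℕ) (c : Fin n → ℝ) (v : Fin n → I → ℝ),
    (∀ k, 0 ≤ c k) ∧ (∀ k, v k ∈ S) ∧ x = ∑ k, c k • v k}

/-- The cone `σ°_p`: the conical hull of the coroots `h_{a b}` with `(b, a) ∈ P`. -/
def sigmaCone {I : Type*} [DecidableEq I] (P : Set (I × I)) : Set (I → ℝ) :=
  conicalHull {v | ∃ a b : I, (b, a) ∈ P ∧ v = corootVec a b}

/-- The coroot `h_{i₁ i₂}` belongs to `σ°_p` iff `(i₂, i₁) ∈ p`; equivalently, the
intersection of `σ°_p` with the set of all coroots is `{h_{i₁ i₂} : (i₂, i₁) ∈ p}`. -/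
theorem statement0 {I : Type*} [Fintype I] [DecidableEq I]
    (P : Set (I × I)) (hP : IsPreposet P) (i₁ i₂ : I) (hne : i₁ ≠ i₂) :
    (corootVec i₁ i₂ ∈ sigmaCone P ↔ (i₂, i₁) ∈ P) ∧
      sigmaCone P ∩ {v | ∃ a b : I, a ≠ b ∧ v = corootVec a b} =
        {v | ∃ a b : I, (b, a) ∈ P ∧ v = corootVec a b} := by
  classical
  have key : ∀ a b : I, a ≠ b → corootVec a b ∈ sigmaCone P → (b, a) ∈ P := by
    intro a b hab hmem
    obtain ⟨n, c, v, hc, hv, hx⟩ := hmem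
    choose A B hAB hvAB using hv
    set S : Finset I := Finset.univ.filter (fun j => j = b ∨ (b, j) ∈ P) with hS
    have hbS : b ∈ S := by simp [hS]
    have hclosed : ∀ x y : I, (x, y) ∈ P → x ∈ S → y ∈ S := by
      intro x y hxy hxS
      simp only [hS, Finset.mem_filter, Finset.mem_univ, true_and] at hxS ⊢
      rcases hxS with rfl | hbx
      · exact Or.inr hxy
      · by_cases hyb : y = b
        · exact Or.inl hyb
        · exact Or.inr (hP.2 b x y hbx hxy (Ne.symm hyb))
    have hT : ∀ x y : I, (∑ j ∈ S, corootVec x y j) =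
        (if x ∈ S then (1 : ℝ) else 0) - (if y ∈ S then 1 else 0) := by
      intro x y
      simp only [corootVec]
      rw [Finset.sum_sub_distrib, Finset.sum_ite_eq' S x (fun _ => (1 : ℝ)),
        Finset.sum_ite_eq' S y (fun _ => (1 : ℝ))]
    have hsum : ∑ j ∈ S, corootVec a b j = ∑ k, c k * (∑ j ∈ S, v k j) := by
      rw [hx]
      simp only [Finset.sum_apply, Pi.smul_apply, smul_eq_mul]
      rw [Finset.sum_comm]
      simp [Finset.mul_sum]
    have hnn : 0 ≤ ∑ k, c k * (∑ j ∈ S, v k j) := by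
      apply Finset.sum_nonneg
      intro k _
      rw [hvAB k, hT]
      by_cases hB : B k ∈ S
      · have hA : A k ∈ S := hclosed (B k) (A k) (hAB k) hB
        simp [hA, hB]
      · apply mul_nonneg (hc k)
        simp only [hB, if_false, sub_zero]
        split <;> norm_num
    rw [← hsum, hT a b, if_pos hbS] at hnn
    by_cases haS : a ∈ S
    · simp only [hS, Finset.mem_filter, Finset.mem_univ, true_and] at haS
      rcases haS with rfl | h
      · exact absurd rfl hab
      · exact h
    · rw [if_neg haS] at hnn
      linarith
  constructor
  · constructor
    · exact key i₁ i₂ hne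
    · intro h
      exact ⟨1, fun _ => 1, fun _ => corootVec i₁ i₂, fun _ => zero_le_one,
        fun _ => ⟨i₁, i₂, h, rfl⟩, by simp⟩
  · ext w
    constructor
    · rintro ⟨hw, a, b, hab, rfl⟩
      exact ⟨a, b, key a b hab hw, rfl⟩
    · rintro ⟨a, b, hba, rfl⟩
      exact ⟨⟨1, fun _ => 1, fun _ => corootVec a b, fun _ => zero_le_one,
        fun _ => ⟨a, b, hba, rfl⟩, by simp⟩, a, b, (hP.1 (b, a) hba).symm, rfl⟩
end

section
/- The assignment p ↦ σ°_p is injective on preposets: if p and q are preposets on a finite set I with σ°_p = σ°_q, then p = q. Hence p ↦ σ°_p is a one-to-one correspondence between preposets on I and those cones in ℝ^I that are generated by coroots. -/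
lemma coroot_sum_filter {I : Type*} [Fintype I] [DecidableEq I]
    (s : Finset I) (a b : I) :
    ∑ i ∈ s, corootVec a b i
      = (if a ∈ s then (1 : ℝ) else 0) - (if b ∈ s then (1 : ℝ) else 0) := by
  simp [corootVec, Finset.sum_sub_distrib]

/-- Key lemma: if the coroot `e_a - e_b` lies in `σ°_Q` for a preposet `Q` and `a ≠ b`,
then `(b, a) ∈ Q`. -/
lemma mem_of_coroot_mem {I : Type*} [Fintype I] [DecidableEq I]
    (Q : Set (I × I)) (hQ : IsPreposet Q) (a b : I) (hab : a ≠ b)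
    (h : corootVec a b ∈ sigmaCone Q) : (b, a) ∈ Q := by
  classical
  by_contra hna
  obtain ⟨n, c, v, hc, hv, hx⟩ := h
  -- down-set of b
  set s : Finset I := Finset.univ.filter (fun i => (b, i) ∈ Q ∨ i = b) with hs
  have hbs : b ∈ s := by simp [hs]
  have has : a ∉ s := by
    simp only [hs, Finset.mem_filter, Finset.mem_univ, true_and]
    rintro (h1 | h2)
    · exact hna h1
    · exact hab h2
  -- the functional φ f = ∑_{i ∈ s} f i is nonnegative on each generator
  have hgen : ∀ k, 0 ≤ ∑ i ∈ s, v k i := by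
    intro k
    obtain ⟨a', b', hba', hvk⟩ := hv k
    rw [hvk, coroot_sum_filter]
    have : b' ∈ s → a' ∈ s := by
      simp only [hs, Finset.mem_filter, Finset.mem_univ, true_and]
      rintro (h1 | h2)
      · by_cases hba : b = a'
        · exact Or.inr hba.symm
        · exact Or.inl (hQ.2 b b' a' h1 hba' hba)
      · subst h2
        exact Or.inl hba'
    by_cases hb' : b' ∈ s
    · simp [hb', this hb']
    · rw [if_neg hb']
      split_ifs <;> norm_num
  -- hence nonnegative on the combination
  have hsum : 0 ≤ ∑ i ∈ s, corootVec a b i := by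
    rw [hx]
    have : ∑ i ∈ s, (∑ k, c k • v k) i = ∑ k, c k * ∑ i ∈ s, v k i := by
      simp only [Finset.sum_apply, Pi.smul_apply, smul_eq_mul, Finset.mul_sum]
      rw [Finset.sum_comm]
    rw [this]
    exact Finset.sum_nonneg fun k _ => mul_nonneg (hc k) (hgen k)
  rw [coroot_sum_filter, if_neg has, if_pos hbs] at hsum
  linarith

lemma coroot_mem_sigmaCone {I : Type*} [Fintype I] [DecidableEq I]
    (P : Set (I × I)) {a b : I} (h : (b, a) ∈ P) :
    corootVec a b ∈ sigmaCone P := by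
  refine ⟨1, fun _ => 1, fun _ => corootVec a b, fun _ => zero_le_one,
    fun _ => ⟨a, b, h, rfl⟩, ?_⟩
  simp

/-- The assignment `p ↦ σ°_p` is injective on preposets. -/
theorem statement1 {I : Type*} [Fintype I] [DecidableEq I]
    (P Q : Set (I × I)) (hP : IsPreposet P) (hQ : IsPreposet Q)
    (h : sigmaCone P = sigmaCone Q) : P = Q := by
  ext ⟨x, y⟩
  constructor
  · intro hxy
    have hne : y ≠ x := (hP.1 _ hxy).symm
    have := coroot_mem_sigmaCone P hxy
    rw [h] at this
    exact mem_of_coroot_mem Q hQ y x hne this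
  · intro hxy
    have hne : y ≠ x := (hQ.1 _ hxy).symm
    have := coroot_mem_sigmaCone Q hxy
    rw [← h] at this
    exact mem_of_coroot_mem P hP y x hne this
end

section
/- For a preposet p on a finite set I, the cone σ°_p has the dual description σ°_p = { h ∈ ℝ^I : Σ_{i∈I} hᵢ = 0, and Σ_{i∈S} hᵢ ≤ 0 for every pair (S,T) of nonempty subsets with I = S ⊔ T and (S,T) ≤ p }. -/
/-- `(S, T) ≤ p`: there is no pair `(t, s) ∈ P` with `t ∈ T` and `s ∈ S`. -/
def compLe {I : Type*} (P : Set (I × I)) (S T : Finset I) : Prop :=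
  ∀ t ∈ T, ∀ s ∈ S, (t, s) ∉ P


lemma zero_mem_conicalHull {I : Type*} (S : Set (I → ℝ)) : (0 : I → ℝ) ∈ conicalHull S := by
  exact ⟨0, 0, fun _ => 0, fun k => le_refl _, fun k => k.elim0, by simp⟩

lemma add_mem_conicalHull {I : Type*} {S : Set (I → ℝ)} {x y : I → ℝ}
    (hx : x ∈ conicalHull S) (hy : y ∈ conicalHull S) : x + y ∈ conicalHull S := by
  obtain ⟨n, c, v, hc, hv, rfl⟩ := hx
  obtain ⟨n', c', v', hc', hv', rfl⟩ := hy
  refine ⟨n + n', Fin.addCases c c', Fin.addCases v v', ?_, ?_, ?_⟩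
  · intro k; induction k using Fin.addCases with
    | left k => simpa using hc k
    | right k => simpa using hc' k
  · intro k; induction k using Fin.addCases with
    | left k => simpa using hv k
    | right k => simpa using hv' k
  · rw [Fin.sum_univ_add]
    congr 1 <;> [skip; skip] <;> apply Finset.sum_congr rfl <;> intro k _ <;> simp

lemma smul_gen_mem_sigmaCone {I : Type*} [DecidableEq I] {P : Set (I × I)} {a b : I}
    (hab : (b, a) ∈ P) {t : ℝ} (ht : 0 ≤ t) :
    (fun i => t * corootVec a b i) ∈ sigmaCone P := by
  refine ⟨1, fun _ => t, fun _ => corootVec a b, fun _ => ht, fun _ => ⟨a, b, hab, rfl⟩, ?_⟩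
  funext i; simp

lemma sum_corootVec {I : Type*} [DecidableEq I] (a b : I) (S : Finset I) :
    (∑ i ∈ S, corootVec a b i) =
      (if a ∈ S then (1:ℝ) else 0) - (if b ∈ S then (1:ℝ) else 0) := by
  unfold corootVec
  rw [Finset.sum_sub_distrib, Finset.sum_ite_eq' S a (fun _ => (1:ℝ)),
    Finset.sum_ite_eq' S b (fun _ => (1:ℝ))]

theorem key_lemma {I : Type*} [Fintype I] [DecidableEq I] (P : Set (I × I))
    (hP : IsPreposet P) :
    ∀ n m : ℕ, ∀ (J : Finset I) (h : I → ℝ), J.card ≤ n →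
      (J.filter fun i => h i ≠ 0).card ≤ m →
      (∀ i, i ∉ J → h i = 0) → (∑ i ∈ J, h i) = 0 →
      (∀ S : Finset I, S ⊆ J → S.Nonempty → S ≠ J →
        (∀ t ∈ J \ S, ∀ s ∈ S, (t, s) ∉ P) → (∑ i ∈ S, h i) ≤ 0) →
      h ∈ sigmaCone P := by
  classical
  intro n
  induction n with
  | zero =>
    intro m J h hJ _ hoff _ _
    have hJe : J = ∅ := Finset.card_eq_zero.mp (Nat.le_zero.mp hJ)
    have : h = 0 := by
      funext i; exact hoff i (by simp [hJe])
    rw [this]; exact zero_mem_conicalHull _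
  | succ n ihn =>
    intro m
    induction m with
    | zero =>
      intro J h _ hm hoff _ _
      have hfe : (J.filter fun i => h i ≠ 0) = ∅ := Finset.card_eq_zero.mp (Nat.le_zero.mp hm)
      have : h = 0 := by
        funext i
        by_cases hi : i ∈ J
        · by_contra hne
          have : i ∈ (J.filter fun i => h i ≠ 0) := Finset.mem_filter.mpr ⟨hi, hne⟩
          simp [hfe] at this
        · exact hoff i hi
      rw [this]; exact zero_mem_conicalHull _
    | succ m ihm =>
      intro J h hJ hm hoff hsum hcut
      -- Case A machinery: decompose along a tight cut
      have caseA : ∀ g : I → ℝ, (∀ i, i ∉ J → g i = 0) → (∑ i ∈ J, g i) = 0 →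
          (∀ S : Finset I, S ⊆ J → S.Nonempty → S ≠ J →
            (∀ t ∈ J \ S, ∀ s ∈ S, (t, s) ∉ P) → (∑ i ∈ S, g i) ≤ 0) →
          (∃ S : Finset I, S ⊆ J ∧ S.Nonempty ∧ S ≠ J ∧
            (∀ t ∈ J \ S, ∀ s ∈ S, (t, s) ∉ P) ∧ (∑ i ∈ S, g i) = 0) →
          g ∈ sigmaCone P := by
        intro g goff gsum gcut ⟨S, hSJ, hSne, hSneJ, hSnoarc, hStight⟩
        set T := J \ S with hT
        have hTne : T.Nonempty := by
          rw [Finset.sdiff_nonempty]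
          intro hJS
          exact hSneJ (Finset.Subset.antisymm hSJ hJS)
        have hScard : S.card ≤ n := by
          have : S.card < J.card := Finset.card_lt_card (lt_of_le_of_ne hSJ hSneJ)
          omega
        have hTcard : T.card ≤ n := by
          have : T.card < J.card := Finset.card_lt_card
            (Finset.sdiff_ssubset hSJ hSne)
          omega
        set gS : I → ℝ := fun i => if i ∈ S then g i else 0 with hgS
        set gT : I → ℝ := fun i => if i ∈ T then g i else 0 with hgT
        have hTsum : (∑ i ∈ T, g i) = 0 := by
          have := Finset.sum_sdiff_eq_sub hSJ (f := g)
          rw [hT, this, gsum, hStight]; ring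
        have hgSmem : gS ∈ sigmaCone P := by
          apply ihn S.card S gS hScard (Finset.card_filter_le _ _)
          · intro i hi; simp [hgS, hi]
          · rw [Finset.sum_ite_mem, Finset.inter_self]; exact hStight
          · intro S1 hS1S hS1ne hS1neS hS1noarc
            have hsub : (∑ i ∈ S1, gS i) = ∑ i ∈ S1, g i := by
              apply Finset.sum_congr rfl
              intro i hi; simp [hgS, hS1S hi]
            rw [hsub]
            apply gcut S1 (hS1S.trans hSJ) hS1ne
            · intro hq; rw [hq] at hS1S
              exact hSneJ (Finset.Subset.antisymm hSJ hS1S)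
            · intro t ht s hs
              rcases Finset.mem_sdiff.mp ht with ⟨htJ, htS1⟩
              by_cases htS : t ∈ S
              · exact hS1noarc t (Finset.mem_sdiff.mpr ⟨htS, htS1⟩) s hs
              · exact hSnoarc t (Finset.mem_sdiff.mpr ⟨htJ, htS⟩) s (hS1S hs)
        have hgTmem : gT ∈ sigmaCone P := by
          apply ihn T.card T gT hTcard (Finset.card_filter_le _ _)
          · intro i hi; simp [hgT, hi]
          · rw [Finset.sum_ite_mem, Finset.inter_self]; exact hTsum
          · intro T1 hT1T hT1ne hT1neT hT1noarc
            have hsub : (∑ i ∈ T1, gT i) = ∑ i ∈ T1, g i := by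
              apply Finset.sum_congr rfl
              intro i hi; simp [hgT, hT1T hi]
            rw [hsub]
            have hdisj : Disjoint S T1 := by
              apply Finset.disjoint_left.mpr
              intro x hxS hxT1
              have := hT1T hxT1
              rw [hT, Finset.mem_sdiff] at this
              exact this.2 hxS
            have key : (∑ i ∈ S ∪ T1, g i) ≤ 0 := by
              apply gcut (S ∪ T1)
              · apply Finset.union_subset hSJ (hT1T.trans (Finset.sdiff_subset))
              · exact hSne.mono Finset.subset_union_left
              · intro hq
                have hTT1 : (T \ T1).Nonempty := Finset.sdiff_nonempty.mpr
                  (fun hc => hT1neT (Finset.Subset.antisymm hT1T hc))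
                obtain ⟨x, hx⟩ := hTT1
                rcases Finset.mem_sdiff.mp hx with ⟨hxT, hxT1⟩
                rcases Finset.mem_sdiff.mp (hT ▸ hxT) with ⟨hxJ, hxS⟩
                rw [← hq] at hxJ
                rcases Finset.mem_union.mp hxJ with h1 | h1
                · exact hxS h1
                · exact hxT1 h1
              · intro t ht s hs
                rcases Finset.mem_sdiff.mp ht with ⟨htJ, htST1⟩
                rw [Finset.mem_union, not_or] at htST1
                rcases Finset.mem_union.mp hs with hsS | hsT1
                · exact hSnoarc t (Finset.mem_sdiff.mpr ⟨htJ, htST1.1⟩) s hsS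
                · apply hT1noarc t _ s hsT1
                  rw [Finset.mem_sdiff]
                  exact ⟨Finset.mem_sdiff.mpr ⟨htJ, htST1.1⟩, htST1.2⟩
            rw [Finset.sum_union hdisj, hStight] at key
            linarith
        have : g = gS + gT := by
          funext i
          by_cases hiS : i ∈ S
          · have hiT : i ∉ T := by simp [hT, hiS]
            simp [hgS, hgT, hiS, hiT]
          · by_cases hiT : i ∈ T
            · simp [hgS, hgT, hiS, hiT]
            · have hiJ : i ∉ J := by
                intro hiJ; exact hiT (Finset.mem_sdiff.mpr ⟨hiJ, hiS⟩)
              simp [hgS, hgT, hiS, hiT, goff i hiJ]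
        rw [this]
        exact add_mem_conicalHull hgSmem hgTmem
      by_cases hz : ∀ i ∈ J, h i = 0
      · have h0 : h = 0 := by
          funext i
          by_cases hi : i ∈ J
          · exact hz i hi
          · exact hoff i hi
        rw [h0]; exact zero_mem_conicalHull _
      push_neg at hz
      have hapos : ∃ a ∈ J, 0 < h a := by
        by_contra hcon
        push_neg at hcon
        obtain ⟨i, hi, hne⟩ := hz
        exact hne ((Finset.sum_eq_zero_iff_of_nonpos hcon).mp hsum i hi)
      obtain ⟨a, haJ, ha⟩ := hapos
      set S0 : Finset I := J.filter (fun i => i = a ∨ (i, a) ∈ P) with hS0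
      have haS0 : a ∈ S0 := Finset.mem_filter.mpr ⟨haJ, Or.inl rfl⟩
      have hS0J : S0 ⊆ J := Finset.filter_subset _ _
      have hS0noarc : ∀ t ∈ J \ S0, ∀ s ∈ S0, (t, s) ∉ P := by
        intro t ht s hs hts
        rcases Finset.mem_sdiff.mp ht with ⟨htJ, htS0⟩
        have hta : ¬(t = a ∨ (t, a) ∈ P) := fun hq => htS0 (Finset.mem_filter.mpr ⟨htJ, hq⟩)
        push_neg at hta
        rcases (Finset.mem_filter.mp hs).2 with hsa | hsa
        · exact hta.2 (hsa ▸ hts)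
        · exact hta.2 (hP.2 t s a hts hsa hta.1)
      have hS0sum : (∑ i ∈ S0, h i) ≤ 0 := by
        by_cases hq : S0 = J
        · rw [hq, hsum]
        · exact hcut S0 hS0J ⟨a, haS0⟩ hq hS0noarc
      have hbex : ∃ b ∈ S0, b ≠ a ∧ h b < 0 := by
        by_contra hcon
        push_neg at hcon
        have h1 : 0 ≤ ∑ i ∈ S0.erase a, h i := by
          apply Finset.sum_nonneg
          intro i hi
          rcases Finset.mem_erase.mp hi with ⟨hia, hiS0⟩
          exact hcon i hiS0 hia
        have h2 : (∑ i ∈ S0, h i) = h a + ∑ i ∈ S0.erase a, h i :=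
          (Finset.add_sum_erase S0 h haS0).symm
        linarith
      obtain ⟨b, hbS0, hba, hbneg⟩ := hbex
      have hbJ : b ∈ J := hS0J hbS0
      have hbaP : (b, a) ∈ P := by
        rcases (Finset.mem_filter.mp hbS0).2 with hq | hq
        · exact absurd hq hba
        · exact hq
      have hane_b : a ≠ b := fun hq => hba hq.symm
      by_cases htight : ∃ S : Finset I, S ⊆ J ∧ S.Nonempty ∧ S ≠ J ∧
          (∀ t ∈ J \ S, ∀ s ∈ S, (t, s) ∉ P) ∧ (∑ i ∈ S, h i) = 0
      · exact caseA h hoff hsum hcut htight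
      push_neg at htight
      have hstrict : ∀ S : Finset I, S ⊆ J → S.Nonempty → S ≠ J →
          (∀ t ∈ J \ S, ∀ s ∈ S, (t, s) ∉ P) → (∑ i ∈ S, h i) < 0 := by
        intro S h1 h2 h3 h4
        exact lt_of_le_of_ne (hcut S h1 h2 h3 h4) (htight S h1 h2 h3 h4)
      set D : Finset (Finset I) := J.powerset.filter (fun S => S.Nonempty ∧ S ≠ J ∧
        (∀ t ∈ J \ S, ∀ s ∈ S, (t, s) ∉ P) ∧ b ∈ S ∧ a ∉ S) with hD
      have hDmem : ∀ S ∈ D, S ⊆ J ∧ S.Nonempty ∧ S ≠ J ∧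
          (∀ t ∈ J \ S, ∀ s ∈ S, (t, s) ∉ P) ∧ b ∈ S ∧ a ∉ S := by
        intro S hS
        rcases Finset.mem_filter.mp hS with ⟨h1, h2⟩
        exact ⟨Finset.mem_powerset.mp h1, h2⟩
      have hDpos : ∀ S ∈ D, 0 < -∑ i ∈ S, h i := by
        intro S hS
        obtain ⟨h1, h2, h3, h4, _, _⟩ := hDmem S hS
        linarith [hstrict S h1 h2 h3 h4]
      have hex : ∃ t : ℝ, 0 < t ∧ t ≤ h a ∧ t ≤ -h b ∧
          (∀ S ∈ D, t ≤ -∑ i ∈ S, h i) ∧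
          (t = h a ∨ t = -h b ∨ ∃ S ∈ D, t = -∑ i ∈ S, h i) := by
        by_cases hDne : D.Nonempty
        · refine ⟨min (min (h a) (-h b)) (D.inf' hDne fun S => -∑ i ∈ S, h i),
            ?_, ?_, ?_, ?_, ?_⟩
          · apply lt_min (lt_min ha (by linarith))
            rw [Finset.lt_inf'_iff]
            exact hDpos
          · exact (min_le_left _ _).trans (min_le_left _ _)
          · exact (min_le_left _ _).trans (min_le_right _ _)
          · intro S hS
            exact (min_le_right _ _).trans (Finset.inf'_le _ hS)
          · rcases min_choice (min (h a) (-h b)) (D.inf' hDne fun S => -∑ i ∈ S, h i)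
              with h1 | h1
            · rw [h1]
              rcases min_choice (h a) (-h b) with h2 | h2
              · exact Or.inl h2
              · exact Or.inr (Or.inl h2)
            · obtain ⟨S, hS, hq⟩ := Finset.exists_mem_eq_inf' hDne fun S => -∑ i ∈ S, h i
              exact Or.inr (Or.inr ⟨S, hS, by rw [h1, hq]⟩)
        · refine ⟨min (h a) (-h b), lt_min ha (by linarith), min_le_left _ _,
            min_le_right _ _, fun S hS => absurd ⟨S, hS⟩ hDne, ?_⟩
          rcases min_choice (h a) (-h b) with h1 | h1
          · exact Or.inl h1
          · exact Or.inr (Or.inl h1)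
      obtain ⟨t, htpos, htha, hthb, htD, hchoice⟩ := hex
      set h' : I → ℝ := fun i => h i - t * corootVec a b i with hh'
      have hcra : corootVec a b a = 1 := by simp [corootVec, hane_b]
      have hcrb : corootVec a b b = -1 := by simp [corootVec, Ne.symm hane_b]
      have hcro : ∀ i, i ≠ a → i ≠ b → corootVec a b i = 0 := by
        intro i h1 h2; simp [corootVec, h1, h2]
      have h'off : ∀ i, i ∉ J → h' i = 0 := by
        intro i hi
        have hia : i ≠ a := fun hq => hi (hq ▸ haJ)
        have hib : i ≠ b := fun hq => hi (hq ▸ hbJ)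
        simp [hh', hoff i hi, hcro i hia hib]
      have h'sum : (∑ i ∈ J, h' i) = 0 := by
        rw [hh']
        simp only
        rw [Finset.sum_sub_distrib, ← Finset.mul_sum, sum_corootVec, hsum,
          if_pos haJ, if_pos hbJ]
        ring
      have h'cut : ∀ S : Finset I, S ⊆ J → S.Nonempty → S ≠ J →
          (∀ t ∈ J \ S, ∀ s ∈ S, (t, s) ∉ P) → (∑ i ∈ S, h' i) ≤ 0 := by
        intro S hSJ hSne hSneJ hnoarc
        have hrw : (∑ i ∈ S, h' i) = (∑ i ∈ S, h i) -
            t * ((if a ∈ S then (1:ℝ) else 0) - (if b ∈ S then (1:ℝ) else 0)) := by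
          rw [hh']
          simp only
          rw [Finset.sum_sub_distrib, ← Finset.mul_sum, sum_corootVec]
        by_cases haS : a ∈ S
        · by_cases hbS : b ∈ S
          · rw [hrw, if_pos haS, if_pos hbS]
            have := hcut S hSJ hSne hSneJ hnoarc
            linarith
          · exact absurd hbaP (hnoarc b (Finset.mem_sdiff.mpr ⟨hbJ, hbS⟩) a haS)
        · by_cases hbS : b ∈ S
          · have hSD : S ∈ D := Finset.mem_filter.mpr
              ⟨Finset.mem_powerset.mpr hSJ, hSne, hSneJ, hnoarc, hbS, haS⟩
            have := htD S hSD
            rw [hrw, if_neg haS, if_pos hbS]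
            linarith
          · rw [hrw, if_neg haS, if_neg hbS]
            have := hcut S hSJ hSne hSneJ hnoarc
            linarith
      have h'mem : h' ∈ sigmaCone P := by
        rcases hchoice with hta | htb | ⟨S, hSD, htS⟩
        · -- t = h a : coordinate a dies
          have h'a : h' a = 0 := by rw [hh']; simp [hcra, hta]
          have hsub : (J.filter fun i => h' i ≠ 0) ⊆
              (J.filter fun i => h i ≠ 0).erase a := by
            intro i hi
            rcases Finset.mem_filter.mp hi with ⟨hiJ, hine⟩
            rw [Finset.mem_erase, Finset.mem_filter]
            refine ⟨fun hq => hine (hq ▸ h'a), hiJ, ?_⟩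
            by_cases hib : i = b
            · rw [hib]; exact ne_of_lt hbneg
            · by_cases hia : i = a
              · rw [hia]; exact ne_of_gt ha
              · intro h0
                exact hine (by rw [hh']; simp [hcro i hia hib, h0])
          have hcard : (J.filter fun i => h' i ≠ 0).card ≤ m := by
            have h1 : a ∈ (J.filter fun i => h i ≠ 0) :=
              Finset.mem_filter.mpr ⟨haJ, ne_of_gt ha⟩
            have h2 := Finset.card_le_card hsub
            rw [Finset.card_erase_of_mem h1] at h2
            omega
          exact ihm J h' hJ hcard h'off h'sum h'cut
        · -- t = -h b : coordinate b dies
          have h'b : h' b = 0 := by rw [hh']; simp [hcrb, htb]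
          have hsub : (J.filter fun i => h' i ≠ 0) ⊆
              (J.filter fun i => h i ≠ 0).erase b := by
            intro i hi
            rcases Finset.mem_filter.mp hi with ⟨hiJ, hine⟩
            rw [Finset.mem_erase, Finset.mem_filter]
            refine ⟨fun hq => hine (hq ▸ h'b), hiJ, ?_⟩
            by_cases hib : i = b
            · rw [hib]; exact ne_of_lt hbneg
            · by_cases hia : i = a
              · rw [hia]; exact ne_of_gt ha
              · intro h0
                exact hine (by rw [hh']; simp [hcro i hia hib, h0])
          have hcard : (J.filter fun i => h' i ≠ 0).card ≤ m := by
            have h1 : b ∈ (J.filter fun i => h i ≠ 0) :=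
              Finset.mem_filter.mpr ⟨hbJ, ne_of_lt hbneg⟩
            have h2 := Finset.card_le_card hsub
            rw [Finset.card_erase_of_mem h1] at h2
            omega
          exact ihm J h' hJ hcard h'off h'sum h'cut
        · -- t = -∑_S h : new tight cut, decompose
          obtain ⟨hSJ, hSne, hSneJ, hnoarc, hbS, haS⟩ := hDmem S hSD
          apply caseA h' h'off h'sum h'cut
          refine ⟨S, hSJ, hSne, hSneJ, hnoarc, ?_⟩
          rw [hh']
          simp only
          rw [Finset.sum_sub_distrib, ← Finset.mul_sum, sum_corootVec,
            if_neg haS, if_pos hbS, htS]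
          ring
      have hfin : h = h' + fun i => t * corootVec a b i := by
        funext i
        simp [hh']
      rw [hfin]
      exact add_mem_conicalHull h'mem (smul_gen_mem_sigmaCone hbaP htpos.le)

/-- Dual description of the cone `σ°_p`. -/
theorem statement2 {I : Type*} [Fintype I] [DecidableEq I]
    (P : Set (I × I)) (hP : IsPreposet P) :
    sigmaCone P = {h : I → ℝ | (∑ i, h i) = 0 ∧
      ∀ S T : Finset I, S.Nonempty → T.Nonempty → Disjoint S T →
        S ∪ T = Finset.univ → compLe P S T → (∑ i ∈ S, h i) ≤ 0} := by
  classical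
  ext h
  constructor
  · rintro ⟨n, c, v, hc, hv, rfl⟩
    have hsumS : ∀ S : Finset I, (∑ i ∈ S, (∑ k, c k • v k) i) =
        ∑ k, c k * ∑ i ∈ S, v k i := by
      intro S
      have h1 : ∀ i, (∑ k, c k • v k) i = ∑ k, c k * v k i := by
        intro i; simp [Finset.sum_apply]
      simp_rw [h1]
      rw [Finset.sum_comm]
      simp_rw [Finset.mul_sum]
    constructor
    · rw [hsumS Finset.univ]
      apply Finset.sum_eq_zero
      intro k _
      obtain ⟨a, b, hba, hvk⟩ := hv k
      rw [hvk, sum_corootVec]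
      simp
    · intro S T hSne hTne hdisj hunion hcomp
      rw [hsumS S]
      apply Finset.sum_nonpos
      intro k _
      obtain ⟨a, b, hba, hvk⟩ := hv k
      rw [hvk, sum_corootVec]
      by_cases haS : a ∈ S
      · have hbS : b ∈ S := by
          by_contra hbS
          have hbT : b ∈ T := by
            have : b ∈ S ∪ T := hunion ▸ Finset.mem_univ b
            rcases Finset.mem_union.mp this with h1 | h1
            · exact absurd h1 hbS
            · exact h1
          exact hcomp b hbT a haS hba
        rw [if_pos haS, if_pos hbS]
        simp
      · rw [if_neg haS]
        have : (0:ℝ) - (if b ∈ S then (1:ℝ) else 0) ≤ 0 := by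
          by_cases hbS : b ∈ S <;> simp [hbS]
        have hck := hc k
        nlinarith
  · rintro ⟨hsum, hcuts⟩
    apply key_lemma P hP (Fintype.card I) (Fintype.card I) Finset.univ h
    · simp
    · simpa using Finset.card_filter_le Finset.univ _
    · intro i hi; simp at hi
    · exact hsum
    · intro S hSJ hSne hSneJ hnoarc
      apply hcuts S (Finset.univ \ S) hSne
      · rw [Finset.sdiff_nonempty]
        intro hsub
        exact hSneJ (Finset.Subset.antisymm hSJ hsub)
      · exact Finset.disjoint_sdiff
      · exact Finset.union_sdiff_of_subset hSJ
      · exact hnoarc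
end

section
/- Let p be a preposet on a finite set I. The polar cone of σ°_p in ℝ^I, namely { λ ∈ ℝ^I : Σ_{i∈I} hᵢ λᵢ ≤ 0 for all h ∈ σ°_p }, equals the set of all vectors of the form Σ_S c_S λ_S + r·𝟙, where the sum runs over nonempty S ⊊ I with (S, I∖S) ≤ p, the coefficients c_S ≥ 0, and r ∈ ℝ; equivalently, in the quotient ℝ^I / ℝ·𝟙 the polar cone of σ°_p is the conical hull of the classes [λ_S] of the indicator vectors of all S with (S, I∖S) ≤ p (S and I∖S nonempty). -/
/-- The 0/1 indicator vector `λ_S ∈ ℝ^I` of `S ⊆ I`. -/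
def indicatorVec {I : Type*} [DecidableEq I] (S : Finset I) : I → ℝ := fun i =>
  if i ∈ S then (1 : ℝ) else 0

lemma sum_coroot {I : Type*} [Fintype I] [DecidableEq I] (a b : I) (lam : I → ℝ) :
    ∑ i, corootVec a b i * lam i = lam a - lam b := by
  unfold corootVec
  simp [sub_mul, Finset.sum_sub_distrib]

lemma decomp {I : Type*} [Fintype I] [DecidableEq I] (P : Set (I × I)) :
    ∀ (n : ℕ) (lam : I → ℝ), (Finset.image lam Finset.univ).card ≤ n →
    (∀ a b : I, (b, a) ∈ P → lam a ≤ lam b) →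
    ∃ (c : Finset I → ℝ) (t : ℝ),
      (∀ S, 0 ≤ c S) ∧
      (∀ S : Finset I, c S ≠ 0 → S.Nonempty ∧ Sᶜ.Nonempty ∧ compLe P S Sᶜ) ∧
      lam = (∑ S : Finset I, c S • indicatorVec S) + t • (fun _ : I => (1 : ℝ)) := by
  intro n
  induction n with
  | zero =>
    intro lam hcard _
    have himg : Finset.image lam Finset.univ = ∅ := Finset.card_eq_zero.mp (le_antisymm hcard (Nat.zero_le _))
    have : (Finset.univ : Finset I) = ∅ := Finset.image_eq_empty.mp himg
    have hE : IsEmpty I := Finset.univ_eq_empty_iff.mp this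
    exact ⟨0, 0, fun S => le_rfl, fun S hS => absurd rfl hS, funext fun i => isEmptyElim i⟩
  | succ n ih =>
    intro lam hcard hmono
    by_cases hconst : ∀ i j : I, lam i = lam j
    · cases isEmpty_or_nonempty I with
      | inl hE => exact ⟨0, 0, fun S => le_rfl, fun S hS => absurd rfl hS, funext fun i => isEmptyElim i⟩
      | inr hNe =>
        refine ⟨0, lam (Classical.arbitrary I), fun S => le_rfl, fun S hS => absurd rfl hS, funext fun i => ?_⟩
        simp [hconst i (Classical.arbitrary I)]
    · push_neg at hconst
      obtain ⟨i0, j0, hij⟩ := hconst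
      set V := Finset.image lam Finset.univ with hV
      have hmemV : ∀ i : I, lam i ∈ V := fun i => Finset.mem_image_of_mem _ (Finset.mem_univ _)
      have hVne : V.Nonempty := ⟨lam i0, hmemV i0⟩
      set M := V.max' hVne with hM
      have hMmem : M ∈ V := V.max'_mem hVne
      obtain ⟨iM, -, hiM⟩ := Finset.mem_image.mp hMmem
      have hle : ∀ i, lam i ≤ M := fun i => V.le_max' _ (hmemV i)
      -- some element has value < M
      have hex : ∃ j, lam j ≠ M := by
        by_cases h : lam i0 = M
        · exact ⟨j0, fun hj => hij (by rw [h, hj])⟩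
        · exact ⟨i0, h⟩
      obtain ⟨jm, hjm⟩ := hex
      have h2 : (V.erase M).Nonempty := ⟨lam jm, Finset.mem_erase.mpr ⟨hjm, hmemV jm⟩⟩
      set M' := (V.erase M).max' h2 with hM'
      have hM'mem : M' ∈ V.erase M := (V.erase M).max'_mem h2
      have hM'lt : M' < M :=
        lt_of_le_of_ne (V.le_max' _ (Finset.mem_of_mem_erase hM'mem)) (Finset.ne_of_mem_erase hM'mem)
      have hkey : ∀ v ∈ V, v ≠ M → v ≤ M' := fun v hv hne =>
        (V.erase M).le_max' v (Finset.mem_erase.mpr ⟨hne, hv⟩)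
      set S : Finset I := Finset.univ.filter (fun i => lam i = M) with hS
      set lam' : I → ℝ := fun i => min (lam i) M' with hlam'
      have hlam'eq : ∀ i, lam i ≠ M → lam' i = lam i := fun i hi =>
        min_eq_left (hkey _ (hmemV i) hi)
      have hlam'M : ∀ i, lam i = M → lam' i = M' := fun i hi => by
        simp only [hlam', hi]; exact min_eq_right hM'lt.le
      have hcard' : (Finset.image lam' Finset.univ).card ≤ n := by
        have hsub : Finset.image lam' Finset.univ ⊆ V.erase M := by
          intro v hv
          obtain ⟨i, -, rfl⟩ := Finset.mem_image.mp hv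
          by_cases h : lam i = M
          · rw [hlam'M i h]; exact hM'mem
          · rw [hlam'eq i h]; exact Finset.mem_erase.mpr ⟨h, hmemV i⟩
        have h3 := Finset.card_le_card hsub
        have h4 : (V.erase M).card = V.card - 1 := Finset.card_erase_of_mem hMmem
        have h5 : 1 ≤ V.card := Finset.card_pos.mpr hVne
        omega
      have hmono' : ∀ a b : I, (b, a) ∈ P → lam' a ≤ lam' b := fun a b h =>
        min_le_min (hmono a b h) le_rfl
      obtain ⟨c', t, hc'0, hc'S, hdec⟩ := ih lam' hcard' hmono'
      have hSprops : S.Nonempty ∧ Sᶜ.Nonempty ∧ compLe P S Sᶜ := by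
        refine ⟨⟨iM, by simp [hS, hiM]⟩, ⟨jm, by simp [hS, hjm]⟩, ?_⟩
        intro t' ht' s hs hts
        have hs' : lam s = M := by simpa [hS] using hs
        have ht'' : lam t' ≠ M := by simpa [hS] using ht'
        have := hmono s t' hts
        have := hle t'
        rw [hs'] at *
        exact ht'' (le_antisymm (hle t') (by linarith))
      refine ⟨fun T => c' T + (if T = S then M - M' else 0), t, ?_, ?_, ?_⟩
      · intro T
        have h0 : (0:ℝ) ≤ if T = S then M - M' else 0 := by
          split <;> linarith [hM'lt]
        show 0 ≤ c' T + _
        linarith [hc'0 T]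
      · intro T hT
        by_cases h : T = S
        · subst h; exact hSprops
        · simp only [h, if_false, add_zero] at hT
          exact hc'S T hT
      · funext i
        have h1 := congrFun hdec i
        simp only [Pi.add_apply, Finset.sum_apply, Pi.smul_apply, smul_eq_mul, mul_one] at h1 ⊢
        simp only [add_mul, Finset.sum_add_distrib, ite_mul, zero_mul,
          Finset.sum_ite_eq', Finset.mem_univ, if_true]
        by_cases h : lam i = M
        · have h2 : indicatorVec S i = 1 := by simp [indicatorVec, hS, h]
          rw [h2, hlam'M i h] at *
          rw [h]; linarith [h1]
        · have h2 : indicatorVec S i = 0 := by simp [indicatorVec, hS, h]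
          rw [h2] at *
          rw [hlam'eq i h] at h1
          linarith [h1]

lemma mono_of_decomp {I : Type*} [Fintype I] [DecidableEq I] (P : Set (I × I))
    (c : Finset I → ℝ) (t : ℝ) (hc0 : ∀ S, 0 ≤ c S)
    (hcS : ∀ S : Finset I, c S ≠ 0 → S.Nonempty ∧ Sᶜ.Nonempty ∧ compLe P S Sᶜ)
    (a b : I) (hba : (b, a) ∈ P) :
    ((∑ S : Finset I, c S • indicatorVec S) + t • (fun _ : I => (1 : ℝ))) a ≤
      ((∑ S : Finset I, c S • indicatorVec S) + t • (fun _ : I => (1 : ℝ))) b := by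
  simp only [Pi.add_apply, Finset.sum_apply, Pi.smul_apply, smul_eq_mul, mul_one]
  have : ∀ S : Finset I, c S * indicatorVec S a ≤ c S * indicatorVec S b := by
    intro S
    by_cases hc : c S = 0
    · simp [hc]
    · apply mul_le_mul_of_nonneg_left _ (hc0 S)
      obtain ⟨-, -, hle⟩ := hcS S hc
      by_cases ha : a ∈ S
      · have hb : b ∈ S := by
          by_contra hb
          exact hle b (Finset.mem_compl.mpr hb) a ha hba
        simp [indicatorVec, ha, hb]
      · simp only [indicatorVec, ha, if_false]
        split <;> norm_num
  have hsum : (∑ S : Finset I, c S * indicatorVec S a) ≤ ∑ S : Finset I, c S * indicatorVec S b :=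
    Finset.sum_le_sum fun S _ => this S
  linarith

/-- The polar cone of `σ°_p` consists exactly of the vectors
`∑_S c_S • λ_S + r • 𝟙` with `c_S ≥ 0` supported on nonempty proper `S` with
`(S, I ∖ S) ≤ p`, and `r ∈ ℝ`. -/
theorem statement3 {I : Type*} [Fintype I] [DecidableEq I]
    (P : Set (I × I)) (hP : IsPreposet P) :
    {lam : I → ℝ | ∀ h ∈ sigmaCone P, (∑ i, h i * lam i) ≤ 0} =
      {lam : I → ℝ | ∃ (c : Finset I → ℝ) (t : ℝ),
        (∀ S, 0 ≤ c S) ∧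
        (∀ S : Finset I, c S ≠ 0 → S.Nonempty ∧ Sᶜ.Nonempty ∧ compLe P S Sᶜ) ∧
        lam = (∑ S : Finset I, c S • indicatorVec S) + t • (fun _ : I => (1 : ℝ))} := by
  ext lam
  simp only [Set.mem_setOf_eq]
  constructor
  · intro hlam
    apply decomp P (Finset.image lam Finset.univ).card lam le_rfl
    intro a b hba
    have hmem : corootVec a b ∈ sigmaCone P := by
      refine ⟨1, fun _ => 1, fun _ => corootVec a b, fun _ => zero_le_one,
        fun _ => ⟨a, b, hba, rfl⟩, by simp⟩
    have := hlam _ hmem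
    rw [sum_coroot] at this
    linarith
  · rintro ⟨c, t, hc0, hcS, rfl⟩ h ⟨m, co, v, hco, hv, rfl⟩
    have hmain : ∑ i, (∑ k, co k • v k) i *
        ((∑ S : Finset I, c S • indicatorVec S) + t • (fun _ : I => (1 : ℝ))) i
        = ∑ k, co k * ∑ i, v k i *
          ((∑ S : Finset I, c S • indicatorVec S) + t • (fun _ : I => (1 : ℝ))) i := by
      simp only [Finset.sum_apply, Pi.smul_apply, smul_eq_mul, Finset.sum_mul, mul_assoc,
        Finset.mul_sum]
      rw [Finset.sum_comm]
    rw [hmain]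
    apply Finset.sum_nonpos
    intro k _
    obtain ⟨a, b, hba, hvk⟩ := hv k
    rw [hvk, sum_coroot]
    have := mono_of_decomp P c t hc0 hcS a b hba
    have h1 : ((∑ S : Finset I, c S • indicatorVec S) + t • (fun _ : I => (1 : ℝ))) a -
        ((∑ S : Finset I, c S • indicatorVec S) + t • (fun _ : I => (1 : ℝ))) b ≤ 0 := by
      linarith
    exact mul_nonpos_of_nonneg_of_nonpos (hco k) h1
end

section
/- Let p be a preposet on a finite set I and let S,T be nonempty subsets with I = S ⊔ T and (S,T) ≤ p. Then the face of σ°_p in the λ_{ST}-direction factorizes: σ°_p ∩ { h ∈ ℝ^I : Σ_{i∈S} hᵢ = 0 } = m_{S,T}( σ°_{p|_S} × σ°_{p|_T} ), and m_{S,T} is injective on σ°_{p|_S} × σ°_{p|_T}. -/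
/-- The restriction `p|_S = p ∩ (S × S)`, as a set of pairs of elements of `S`. -/
def restrictPairs {I : Type*} (P : Set (I × I)) (S : Finset I) :
    Set ({i // i ∈ S} × {i // i ∈ S}) :=
  {x | (x.1.1, x.2.1) ∈ P}

/-- The linear isomorphism `m_{S,T} : ℝ^S × ℝ^T → ℝ^I` for `I = S ⊔ T`, sending
`(f, g)` to the function equal to `f` on `S` and to `g` on `T`. -/
def combineMap {I : Type*} [DecidableEq I] (S T : Finset I)
    (hcover : ∀ i : I, i ∉ S → i ∈ T)
    (f : {i // i ∈ S} → ℝ) (g : {i // i ∈ T} → ℝ) : I → ℝ := fun i =>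
  if h : i ∈ S then f ⟨i, h⟩ else g ⟨i, hcover i h⟩

section CH
variable {I : Type*} {A : Set (I → ℝ)}

lemma zero_mem_CH : (0 : I → ℝ) ∈ conicalHull A :=
  ⟨0, fun k => 0, fun k => 0, fun k => k.elim0, fun k => k.elim0, by simp⟩

lemma mem_CH_of_mem {v : I → ℝ} (hv : v ∈ A) : v ∈ conicalHull A :=
  ⟨1, fun _ => 1, fun _ => v, fun _ => zero_le_one, fun _ => hv, by simp⟩

lemma smul_mem_CH {c : ℝ} (hc : 0 ≤ c) {x : I → ℝ} (hx : x ∈ conicalHull A) :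
    c • x ∈ conicalHull A := by
  obtain ⟨n, d, v, hd, hv, rfl⟩ := hx
  exact ⟨n, fun k => c * d k, v, fun k => mul_nonneg hc (hd k), hv, by
    rw [Finset.smul_sum]; simp [mul_smul]⟩

lemma add_mem_CH {x y : I → ℝ} (hx : x ∈ conicalHull A) (hy : y ∈ conicalHull A) :
    x + y ∈ conicalHull A := by
  obtain ⟨n, c, v, hc, hv, rfl⟩ := hx
  obtain ⟨m, d, w, hd, hw, rfl⟩ := hy
  refine ⟨n + m, Fin.addCases c d, Fin.addCases v w, ?_, ?_, ?_⟩
  · intro k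
    refine Fin.addCases (fun i => ?_) (fun i => ?_) k <;> simp [hc, hd]
  · intro k
    refine Fin.addCases (fun i => ?_) (fun i => ?_) k <;> simp [hv, hw]
  · rw [Fin.sum_univ_add]; simp

lemma map_mem_CH {J : Type*} (L : (I → ℝ) →ₗ[ℝ] (J → ℝ)) {B : Set (J → ℝ)}
    (hAB : ∀ u ∈ A, L u ∈ B) {x : I → ℝ} (hx : x ∈ conicalHull A) :
    L x ∈ conicalHull B := by
  obtain ⟨n, c, v, hc, hv, rfl⟩ := hx
  exact ⟨n, c, fun k => L (v k), hc, fun k => hAB _ (hv k), by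
    rw [map_sum]; simp⟩

end CH

section Combine
variable {I : Type*} [DecidableEq I] (S T : Finset I)
  (hcover : ∀ i : I, i ∉ S → i ∈ T)

lemma combineMap_add (f f' : {i // i ∈ S} → ℝ) (g g' : {i // i ∈ T} → ℝ) :
    combineMap S T hcover (f + f') (g + g') =
      combineMap S T hcover f g + combineMap S T hcover f' g' := by
  funext i
  by_cases h : i ∈ S <;> simp [combineMap, h]

lemma combineMap_smul (c : ℝ) (f : {i // i ∈ S} → ℝ) (g : {i // i ∈ T} → ℝ) :
    combineMap S T hcover (c • f) (c • g) = c • combineMap S T hcover f g := by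
  funext i
  by_cases h : i ∈ S <;> simp [combineMap, h]

lemma combineMap_zero : combineMap S T hcover 0 0 = 0 := by
  funext i
  by_cases h : i ∈ S <;> simp [combineMap, h]

/-- `f ↦ combineMap f 0` as a linear map. -/
def combineMapS : ({i // i ∈ S} → ℝ) →ₗ[ℝ] (I → ℝ) where
  toFun f := combineMap S T hcover f 0
  map_add' f f' := by simpa using combineMap_add S T hcover f f' 0 0
  map_smul' c f := by simpa using combineMap_smul S T hcover c f 0

/-- `g ↦ combineMap 0 g` as a linear map. -/
def combineMapT : ({i // i ∈ T} → ℝ) →ₗ[ℝ] (I → ℝ) where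
  toFun g := combineMap S T hcover 0 g
  map_add' g g' := by simpa using combineMap_add S T hcover 0 0 g g'
  map_smul' c g := by simpa using combineMap_smul S T hcover c 0 g

lemma combineMap_split (f : {i // i ∈ S} → ℝ) (g : {i // i ∈ T} → ℝ) :
    combineMap S T hcover f g =
      combineMap S T hcover f 0 + combineMap S T hcover 0 g := by
  funext i
  by_cases h : i ∈ S <;> simp [combineMap, h]

lemma combineMap_coroot_S {a b : I} (ha : a ∈ S) (hb : b ∈ S) :
    combineMap S T hcover (corootVec (⟨a, ha⟩ : {i // i ∈ S}) ⟨b, hb⟩) 0 =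
      corootVec a b := by
  funext i
  by_cases h : i ∈ S
  · simp [combineMap, corootVec, h, Subtype.ext_iff]
  · have hia : i ≠ a := fun e => h (e ▸ ha)
    have hib : i ≠ b := fun e => h (e ▸ hb)
    simp [combineMap, corootVec, h, hia, hib]

lemma combineMap_coroot_T {a b : I} (ha : a ∈ T) (hb : b ∈ T)
    (ha' : a ∉ S) (hb' : b ∉ S) :
    combineMap S T hcover 0 (corootVec (⟨a, ha⟩ : {i // i ∈ T}) ⟨b, hb⟩) =
      corootVec a b := by
  funext i
  by_cases h : i ∈ S
  · have hia : i ≠ a := fun e => ha' (e ▸ h)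
    have hib : i ≠ b := fun e => hb' (e ▸ h)
    simp [combineMap, corootVec, h, hia, hib]
  · simp [combineMap, corootVec, h, Subtype.ext_iff]

lemma sum_S_combine (f : {i // i ∈ S} → ℝ) (g : {i // i ∈ T} → ℝ) :
    ∑ i ∈ S, combineMap S T hcover f g i = ∑ j : {i // i ∈ S}, f j := by
  rw [← Finset.sum_attach S (fun i => combineMap S T hcover f g i)]
  exact (Finset.sum_congr rfl fun j _ => by simp [combineMap, j.2]).symm

end Combine

lemma sum_corootVec_s6 {J : Type*} [Fintype J] [DecidableEq J] (a b : J) :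
    ∑ j, corootVec a b j = 0 := by
  simp [corootVec, Finset.sum_sub_distrib]

lemma sum_eq_zero_of_mem_sigmaCone {J : Type*} [Fintype J] [DecidableEq J]
    {Q : Set (J × J)} {f : J → ℝ} (hf : f ∈ sigmaCone Q) : ∑ j, f j = 0 := by
  obtain ⟨n, c, v, hc, hv, rfl⟩ := hf
  simp only [Finset.sum_apply, Pi.smul_apply, smul_eq_mul]
  rw [Finset.sum_comm]
  refine Finset.sum_eq_zero fun k _ => ?_
  obtain ⟨a, b, -, hab⟩ := hv k
  rw [hab, ← Finset.mul_sum, sum_corootVec_s6, mul_zero]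

/-- The face of `σ°_p` in the `λ_{ST}`-direction factorizes as
`m_{S,T}(σ°_{p|_S} × σ°_{p|_T})`, and `m_{S,T}` is injective there. -/
theorem statement6 {I : Type*} [Fintype I] [DecidableEq I]
    (P : Set (I × I)) (hP : IsPreposet P)
    (S T : Finset I) (hS : S.Nonempty) (hT : T.Nonempty)
    (hdisj : Disjoint S T) (hcover : ∀ i : I, i ∉ S → i ∈ T)
    (hle : ∀ t ∈ T, ∀ s ∈ S, (t, s) ∉ P) :
    sigmaCone P ∩ {h : I → ℝ | (∑ i ∈ S, h i) = 0} =
      (fun fg : ({i // i ∈ S} → ℝ) × ({i // i ∈ T} → ℝ) =>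
          combineMap S T hcover fg.1 fg.2) ''
        (sigmaCone (restrictPairs P S) ×ˢ sigmaCone (restrictPairs P T)) ∧
    Set.InjOn
      (fun fg : ({i // i ∈ S} → ℝ) × ({i // i ∈ T} → ℝ) =>
        combineMap S T hcover fg.1 fg.2)
      (sigmaCone (restrictPairs P S) ×ˢ sigmaCone (restrictPairs P T)) := by
  set Im : Set (I → ℝ) :=
    (fun fg : ({i // i ∈ S} → ℝ) × ({i // i ∈ T} → ℝ) =>
        combineMap S T hcover fg.1 fg.2) ''
      (sigmaCone (restrictPairs P S) ×ˢ sigmaCone (restrictPairs P T)) with hIm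
  have Im_zero : (0 : I → ℝ) ∈ Im :=
    ⟨(0, 0), ⟨zero_mem_CH, zero_mem_CH⟩, combineMap_zero S T hcover⟩
  have Im_add : ∀ x y : I → ℝ, x ∈ Im → y ∈ Im → x + y ∈ Im := by
    rintro x y ⟨⟨f, g⟩, ⟨hf, hg⟩, rfl⟩ ⟨⟨f', g'⟩, ⟨hf', hg'⟩, rfl⟩
    refine ⟨(f + f', g + g'), ⟨add_mem_CH hf hf', add_mem_CH hg hg'⟩, ?_⟩
    show combineMap S T hcover (f + f') (g + g') = _
    exact combineMap_add S T hcover f f' g g'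
  constructor
  · apply Set.Subset.antisymm
    · -- forward direction
      rintro x ⟨⟨n, c, v, hc, hv, rfl⟩, hsum⟩
      choose a b hPab hvk using hv
      have hsum' : ∑ k, c k * ∑ i ∈ S, v k i = 0 := by
        have : ∑ i ∈ S, (∑ k, c k • v k) i = 0 := hsum
        simp only [Finset.sum_apply, Pi.smul_apply, smul_eq_mul] at this
        rw [Finset.sum_comm] at this
        simpa [Finset.mul_sum] using this
      have hSval : ∀ k, (∑ i ∈ S, v k i) =
          (if a k ∈ S then (1:ℝ) else 0) - (if b k ∈ S then 1 else 0) := by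
        intro k
        rw [hvk k]
        simp [corootVec, Finset.sum_sub_distrib, Finset.sum_ite_eq']
      have hterm : ∀ k ∈ Finset.univ (α := Fin n), c k * ∑ i ∈ S, v k i = 0 := by
        rw [← Finset.sum_eq_zero_iff_of_nonpos, hsum']
        intro k _
        rw [hSval k]
        have hck := hc k
        by_cases ha : a k ∈ S
        · by_cases hb : b k ∈ S
          · simp [ha, hb]
          · exact absurd (hPab k) (hle _ (hcover _ hb) _ ha)
        · by_cases hb : b k ∈ S
          · simp only [if_neg ha, if_pos hb]
            nlinarith
          · simp [ha, hb]
      refine Finset.sum_induction _ (· ∈ Im) Im_add Im_zero fun k _ => ?_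
      rcases eq_or_lt_of_le (hc k) with hck | hck
      · rw [← hck, zero_smul]; exact Im_zero
      · have hzero : (∑ i ∈ S, v k i) = 0 := by
          have := hterm k (Finset.mem_univ k)
          exact (mul_eq_zero.mp this).resolve_left (ne_of_gt hck)
        rw [hSval k] at hzero
        by_cases hb : b k ∈ S
        · have ha : a k ∈ S := by
            by_contra ha
            simp [ha, hb] at hzero
          refine ⟨(c k • corootVec (⟨a k, ha⟩ : {i // i ∈ S}) ⟨b k, hb⟩, 0),
            ⟨smul_mem_CH (hc k) (mem_CH_of_mem ⟨⟨a k, ha⟩, ⟨b k, hb⟩, hPab k, rfl⟩), zero_mem_CH⟩, ?_⟩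
          show combineMap S T hcover _ _ = _
          rw [show (0 : {i // i ∈ T} → ℝ) = c k • 0 by simp,
            combineMap_smul, combineMap_coroot_S, hvk k]
        · have ha : a k ∉ S := fun ha => hle _ (hcover _ hb) _ ha (hPab k)
          refine ⟨(0, c k • corootVec (⟨a k, hcover _ ha⟩ : {i // i ∈ T}) ⟨b k, hcover _ hb⟩),
            ⟨zero_mem_CH, smul_mem_CH (hc k) (mem_CH_of_mem ⟨⟨a k, hcover _ ha⟩, ⟨b k, hcover _ hb⟩, hPab k, rfl⟩)⟩, ?_⟩
          show combineMap S T hcover _ _ = _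
          rw [show (0 : {i // i ∈ S} → ℝ) = c k • 0 by simp,
            combineMap_smul, combineMap_coroot_T S T hcover _ _ ha hb, hvk k]
    · -- backward direction
      rintro x ⟨⟨f, g⟩, ⟨hf, hg⟩, rfl⟩
      constructor
      · show combineMap S T hcover f g ∈ sigmaCone P
        rw [combineMap_split]
        apply add_mem_CH
        · refine map_mem_CH (combineMapS S T hcover) ?_ hf
          rintro u ⟨⟨a, ha⟩, ⟨b, hb⟩, hab, rfl⟩
          exact ⟨a, b, hab, combineMap_coroot_S S T hcover ha hb⟩
        · refine map_mem_CH (combineMapT S T hcover) ?_ hg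
          rintro u ⟨⟨a, ha⟩, ⟨b, hb⟩, hab, rfl⟩
          exact ⟨a, b, hab, combineMap_coroot_T S T hcover ha hb
            (fun h => Finset.disjoint_left.mp hdisj h ha)
            (fun h => Finset.disjoint_left.mp hdisj h hb)⟩
      · show ∑ i ∈ S, combineMap S T hcover f g i = 0
        rw [sum_S_combine]
        exact sum_eq_zero_of_mem_sigmaCone hf
  · -- injectivity
    rintro ⟨f, g⟩ - ⟨f', g'⟩ - h
    simp only at h
    have hf : f = f' := by
      funext j
      have := congrFun h j.1
      simpa [combineMap, j.2] using this
    have hg : g = g' := by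
      funext j
      have hjS : (j : I) ∉ S := fun hs => Finset.disjoint_left.mp hdisj hs j.2
      have := congrFun h j.1
      simp only [combineMap, dif_neg hjS] at this
      have he : (⟨(j : I), hcover _ hjS⟩ : {i // i ∈ T}) = j := Subtype.ext rfl
      rwa [he] at this
    rw [Prod.ext_iff]
    exact ⟨hf, hg⟩
end

section
/- (Bimonoid axiom for Boolean functions.) Let I = S ⊔ T ⊔ U ⊔ V be a finite set (the parts may be empty), let z₁ be a Boolean function on S ⊔ T and z₂ a Boolean function on U ⊔ V. Then, with respect to the decomposition I = (S∪U) ⊔ (T∪V): (z₁|z₂)⫿_{S∪U} = (z₁⫿_S | z₂⫿_U) as Boolean functions on S ∪ U, and (z₁|z₂)⫽_{T∪V} = (z₁⫽_T | z₂⫽_V) as Boolean functions on T ∪ V. -/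
/-- Restriction `z⫿_S` of a Boolean function to a subset `S` (evaluate on `A ∩ S`;
for `A ⊆ S` this is just `z A`). -/
def bfRes {I : Type*} [DecidableEq I] (S : Finset I) (z : Finset I → ℤ) :
    Finset I → ℤ := fun A => z (A ∩ S)

/-- Quotient `z⫽_T` of a Boolean function with respect to the decomposition
`I = S ⊔ T`: `A ↦ z (A ∪ S) - z S`. -/
def bfQuot {I : Type*} [DecidableEq I] (S : Finset I) (z : Finset I → ℤ) :
    Finset I → ℤ := fun A => z (A ∪ S) - z S

/-- Union `(z₁|z₂)` of Boolean functions `z₁` on `S` and `z₂` on `T`: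
`A ↦ z₁ (A ∩ S) + z₂ (A ∩ T)`. -/
def bfUnion {I : Type*} [DecidableEq I] (S T : Finset I) (z₁ z₂ : Finset I → ℤ) :
    Finset I → ℤ := fun A => z₁ (A ∩ S) + z₂ (A ∩ T)

/-- Bimonoid axiom for Boolean functions: for `I = S ⊔ T ⊔ U ⊔ V`, `z₁` Boolean on
`S ⊔ T` and `z₂` Boolean on `U ⊔ V`, with respect to `I = (S∪U) ⊔ (T∪V)`:
`(z₁|z₂)⫿_{S∪U} = (z₁⫿_S | z₂⫿_U)` as Boolean functions on `S ∪ U`, and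
`(z₁|z₂)⫽_{T∪V} = (z₁⫽_T | z₂⫽_V)` as Boolean functions on `T ∪ V`. -/
theorem statement12 {I : Type*} [Fintype I] [DecidableEq I]
    (S T U V : Finset I)
    (hST : Disjoint S T) (hSU : Disjoint S U) (hSV : Disjoint S V)
    (hTU : Disjoint T U) (hTV : Disjoint T V) (hUV : Disjoint U V)
    (hcover : S ∪ T ∪ U ∪ V = Finset.univ)
    (z₁ z₂ : Finset I → ℤ) (hz₁ : z₁ ∅ = 0) (hz₂ : z₂ ∅ = 0) :
    (∀ A : Finset I, A ⊆ S ∪ U →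
      bfRes (S ∪ U) (bfUnion (S ∪ T) (U ∪ V) z₁ z₂) A =
        bfUnion S U (bfRes S z₁) (bfRes U z₂) A) ∧
    (∀ A : Finset I, A ⊆ T ∪ V →
      bfQuot (S ∪ U) (bfUnion (S ∪ T) (U ∪ V) z₁ z₂) A =
        bfUnion T V (bfQuot S z₁) (bfQuot U z₂) A) := by
  have dST := Finset.disjoint_left.mp hST
  have dSU := Finset.disjoint_left.mp hSU
  have dSV := Finset.disjoint_left.mp hSV
  have dTU := Finset.disjoint_left.mp hTU
  have dTV := Finset.disjoint_left.mp hTV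
  have dUV := Finset.disjoint_left.mp hUV
  constructor
  · intro A hA
    simp only [bfRes, bfUnion]
    have h1 : A ∩ (S ∪ U) ∩ (S ∪ T) = A ∩ S := by
      ext x
      have e3 := @dSV x; have e4 := @dTU x
      simp only [Finset.mem_inter, Finset.mem_union]
      tauto
    have h2 : A ∩ (S ∪ U) ∩ (U ∪ V) = A ∩ U := by
      ext x
      have e3 := @dSV x; have e4 := @dTU x
      simp only [Finset.mem_inter, Finset.mem_union]
      tauto
    rw [h1, h2]; simp [Finset.inter_assoc]
  · intro A hA
    simp only [bfQuot, bfUnion]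
    have h1 : (A ∪ (S ∪ U)) ∩ (S ∪ T) = A ∩ T ∪ S := by
      ext x
      have e3 := @dSV x; have e4 := @dTU x
      simp only [Finset.mem_inter, Finset.mem_union]
      tauto
    have h2 : (A ∪ (S ∪ U)) ∩ (U ∪ V) = A ∩ V ∪ U := by
      ext x
      have e3 := @dSV x; have e4 := @dTU x
      simp only [Finset.mem_inter, Finset.mem_union]
      tauto
    have h3 : (S ∪ U) ∩ (S ∪ T) = S := by
      ext x
      have e3 := @dSV x; have e4 := @dTU x
      simp only [Finset.mem_inter, Finset.mem_union]
      tauto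
    have h4 : (S ∪ U) ∩ (U ∪ V) = U := by
      ext x
      have e3 := @dSV x; have e4 := @dTU x
      simp only [Finset.mem_inter, Finset.mem_union]
      tauto
    rw [h1, h2, h3, h4]
    ring
end

section
/- (Plates multiply.) Let I = S₁ ⊔ … ⊔ S_k be a finite set with each S_i nonempty, let z_i be a Boolean function on S_i for each i, and let H = (A₁,…,A_ℓ) be a composition of I with initial segments Ā_j = A₁ ∪ … ∪ A_j. Define (z₁|…|z_k)(A) := Σ_i z_i(A ∩ S_i). Then the combining map ℝ^{S₁} × … × ℝ^{S_k} → ℝ^I restricts to an injection of [[H|_{S₁}]]_{z₁} × … × [[H|_{S_k}]]_{z_k} into [[H]]_{(z₁|…|z_k)}, whose image is exactly { h ∈ ℝ^I : Σ_{i∈I} hᵢ = Σ_i z_i(S_i), and Σ_{i∈A} hᵢ ≤ (z₁|…|z_k)(A) for every A ⊆ I such that for each i there is some 0 ≤ j_i ≤ ℓ with A ∩ S_i = Ā_{j_i} ∩ S_i }. -/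
/-- A composition of the subset `S ⊆ I`, encoded as a block-index function `f : I → ℕ`
whose image on `S` is an initial segment of `ℕ` (blocks are the fibers of `f` in `S`,
listed in increasing order of their index; the initial segments `Ā_j` of the
composition are the sublevel sets of `f`). -/
def IsCompositionOn {I : Type*} (S : Set I) (f : I → ℕ) : Prop :=
  ∀ n m : ℕ, n ≤ m → (∃ i ∈ S, f i = m) → ∃ i ∈ S, f i = n

/-- The initial segment `Ā_j` of the composition encoded by `f`. -/
def sublevel {I : Type*} [Fintype I] (f : I → ℕ) (j : ℕ) : Finset I :=
  Finset.univ.filter (fun i => f i < j)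

/-- The plate `[[H]]_z ⊆ ℝ^I` of the composition encoded by `f` and the Boolean
function `z`. -/
def plate {I : Type*} [Fintype I] (f : I → ℕ) (z : Finset I → ℤ) : Set (I → ℝ) :=
  {h | (∑ i, h i) = (z Finset.univ : ℝ) ∧
    ∀ j : ℕ, (∑ i ∈ sublevel f j, h i) ≤ (z (sublevel f j) : ℝ)}

/-- The plate `[[H|_S]]_z ⊆ ℝ^S` of the restriction to `S` of the composition
encoded by `f`, for a Boolean function `z` on `S`. -/
def plateOn {I : Type*} [DecidableEq I] (S : Finset I) (f : I → ℕ)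
    (z : Finset I → ℤ) : Set ({i // i ∈ S} → ℝ) :=
  {h | (∑ i ∈ S.attach, h i) = (z S : ℝ) ∧
    ∀ j : ℕ, (∑ i ∈ S.attach.filter (fun i => f i.1 < j), h i) ≤
      (z (S.filter (fun i => f i < j)) : ℝ)}

/-- The combining map `ℝ^{S₁} × ⋯ × ℝ^{S_k} → ℝ^I` for a partition `I = S₁ ⊔ ⋯ ⊔ S_k`. -/
def combineFam {I : Type*} [DecidableEq I] {k : ℕ} (Ss : Fin k → Finset I)
    (h : (m : Fin k) → {i // i ∈ Ss m} → ℝ) : I → ℝ := fun i =>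
  ∑ m : Fin k, if hm : i ∈ Ss m then h m ⟨i, hm⟩ else 0

/-- The Boolean function `(z₁|⋯|z_k) : A ↦ ∑ᵢ zᵢ (A ∩ Sᵢ)`. -/
def bfFamUnion {I : Type*} [DecidableEq I] {k : ℕ} (Ss : Fin k → Finset I)
    (z : Fin k → Finset I → ℤ) : Finset I → ℤ := fun A => ∑ m, z m (A ∩ Ss m)

section Helpers
set_option linter.unusedSectionVars false
set_option linter.unusedVariables false
variable {I : Type*} [Fintype I] [DecidableEq I] {k : ℕ}

lemma combineFam_eval (Ss : Fin k → Finset I)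
    (hdisj : ∀ m m' : Fin k, m ≠ m' → Disjoint (Ss m) (Ss m'))
    (h : (m : Fin k) → {i // i ∈ Ss m} → ℝ) {i : I} {m : Fin k} (hi : i ∈ Ss m) :
    combineFam Ss h i = h m ⟨i, hi⟩ := by
  unfold combineFam
  rw [Finset.sum_eq_single m]
  · rw [dif_pos hi]
  · intro m' _ hne
    rw [dif_neg]
    exact fun hi' => Finset.disjoint_left.mp (hdisj m' m hne) hi' hi
  · intro hm; exact absurd (Finset.mem_univ m) hm

lemma sum_attach_filter_eq (S : Finset I) (P : I → Prop) [DecidablePred P]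
    (h : {i // i ∈ S} → ℝ) (g : I → ℝ) (hg : ∀ i (hi : i ∈ S), g i = h ⟨i, hi⟩) :
    (∑ x ∈ S.attach.filter (fun x => P x.1), h x) = ∑ i ∈ S.filter P, g i := by
  rw [Finset.sum_filter, Finset.sum_filter,
    ← Finset.sum_attach S (fun i => if P i then g i else 0)]
  refine Finset.sum_congr rfl fun x _ => ?_
  by_cases hP : P x.1
  · rw [if_pos hP, if_pos hP, hg x.1 x.2]
  · rw [if_neg hP, if_neg hP]

lemma partition_sum (Ss : Fin k → Finset I) (σ : I → Fin k)
    (hσ : ∀ i m, i ∈ Ss m ↔ σ i = m) (A : Finset I) (g : I → ℝ) :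
    ∑ i ∈ A, g i = ∑ m, ∑ i ∈ A ∩ Ss m, g i := by
  rw [← Finset.sum_fiberwise A σ g]
  refine Finset.sum_congr rfl fun m _ => Finset.sum_congr ?_ fun _ _ => rfl
  ext i
  simp only [Finset.mem_filter, Finset.mem_inter]
  constructor
  · rintro ⟨hA, hm⟩; exact ⟨hA, (hσ i m).mpr hm⟩
  · rintro ⟨hA, hm⟩; exact ⟨hA, (hσ i m).mp hm⟩

end Helpers

/-- Plates multiply: the combining map restricts to an injection of
`[[H|_{S₁}]]_{z₁} × ⋯ × [[H|_{S_k}]]_{z_k}` into `[[H]]_{(z₁|⋯|z_k)}`, whose image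
consists exactly of the `h` with total sum `∑ᵢ zᵢ(Sᵢ)` satisfying
`∑_{i ∈ A} hᵢ ≤ (z₁|⋯|z_k)(A)` for every `A` whose intersection with each `Sᵢ` is of
the form `Ā_j ∩ Sᵢ`. -/
theorem statement14 {I : Type*} [Fintype I] [DecidableEq I] {k : ℕ}
    (Ss : Fin k → Finset I) (hSne : ∀ m, (Ss m).Nonempty)
    (hdisj : ∀ m m' : Fin k, m ≠ m' → Disjoint (Ss m) (Ss m'))
    (hcover : ∀ i : I, ∃ m, i ∈ Ss m)
    (z : Fin k → Finset I → ℤ) (hz : ∀ m, z m ∅ = 0)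
    (f : I → ℕ) (hf : IsCompositionOn Set.univ f) :
    Set.InjOn (combineFam Ss) {h | ∀ m, h m ∈ plateOn (Ss m) f (z m)} ∧
    combineFam Ss '' {h | ∀ m, h m ∈ plateOn (Ss m) f (z m)} ⊆
      plate f (bfFamUnion Ss z) ∧
    combineFam Ss '' {h | ∀ m, h m ∈ plateOn (Ss m) f (z m)} =
      {h : I → ℝ | (∑ i, h i) = ((∑ m, z m (Ss m) : ℤ) : ℝ) ∧
        ∀ A : Finset I,
          (∀ m, ∃ j : ℕ, A ∩ Ss m = (Ss m).filter (fun i => f i < j)) →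
          (∑ i ∈ A, h i) ≤ (bfFamUnion Ss z A : ℝ)} := by
  classical
  choose σ hσmem using hcover
  have hσ : ∀ i m, i ∈ Ss m ↔ σ i = m := by
    intro i m
    constructor
    · intro hi
      by_contra hne
      exact Finset.disjoint_left.mp (hdisj (σ i) m hne) (hσmem i) hi
    · rintro rfl; exact hσmem i
  set N := (Finset.univ.sup f) + 1 with hN
  have hfN : ∀ i : I, f i < N := fun i =>
    Nat.lt_succ_of_le (Finset.le_sup (Finset.mem_univ i))
  -- sums of combined functions over arbitrary sets
  have hsum : ∀ (h : (m : Fin k) → {i // i ∈ Ss m} → ℝ) (A : Finset I),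
      ∑ i ∈ A, combineFam Ss h i
        = ∑ m, ∑ x ∈ (Ss m).attach.filter (fun x => x.1 ∈ A), h m x := by
    intro h A
    rw [partition_sum Ss σ hσ A]
    refine Finset.sum_congr rfl fun m _ => ?_
    rw [sum_attach_filter_eq (Ss m) (· ∈ A) (h m) (combineFam Ss h)
      (fun i hi => combineFam_eval Ss hdisj h hi),
      Finset.filter_mem_eq_inter, Finset.inter_comm]
  -- total sum of combined functions in the plate family
  have htotal : ∀ h, (∀ m, h m ∈ plateOn (Ss m) f (z m)) →
      (∑ i, combineFam Ss h i) = ((∑ m, z m (Ss m) : ℤ) : ℝ) := by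
    intro h hh
    have := hsum h Finset.univ
    simp only [Finset.mem_univ, Finset.filter_true] at this
    rw [this]
    push_cast
    exact Finset.sum_congr rfl fun m _ => (hh m).1
  -- inequality for admissible sets A
  have hineq : ∀ h, (∀ m, h m ∈ plateOn (Ss m) f (z m)) →
      ∀ A : Finset I, (∀ m, ∃ j : ℕ, A ∩ Ss m = (Ss m).filter (fun i => f i < j)) →
      (∑ i ∈ A, combineFam Ss h i) ≤ (bfFamUnion Ss z A : ℝ) := by
    intro h hh A hA
    choose js hjs using hA
    rw [hsum h A]
    unfold bfFamUnion
    push_cast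
    refine Finset.sum_le_sum fun m _ => ?_
    have hAe : (Ss m).attach.filter (fun x => x.1 ∈ A)
        = (Ss m).attach.filter (fun x => f x.1 < js m) := by
      ext x
      simp only [Finset.mem_filter, Finset.mem_attach, true_and]
      constructor
      · intro hxA
        have hx : x.1 ∈ A ∩ Ss m := Finset.mem_inter.mpr ⟨hxA, x.2⟩
        rw [hjs m] at hx
        exact (Finset.mem_filter.mp hx).2
      · intro hfx
        have hx : x.1 ∈ (Ss m).filter (fun i => f i < js m) :=
          Finset.mem_filter.mpr ⟨x.2, hfx⟩
        rw [← hjs m] at hx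
        exact (Finset.mem_inter.mp hx).1
    rw [hAe, hjs m]
    exact (hh m).2 (js m)
  -- inclusion of image into plate
  have hsubset : combineFam Ss '' {h | ∀ m, h m ∈ plateOn (Ss m) f (z m)} ⊆
      plate f (bfFamUnion Ss z) := by
    rintro g ⟨h, hh, rfl⟩
    constructor
    · rw [htotal h hh]
      unfold bfFamUnion
      push_cast
      refine Finset.sum_congr rfl fun m _ => ?_
      rw [Finset.univ_inter]
    · intro j
      refine hineq h hh (sublevel f j) fun m => ⟨j, ?_⟩
      ext i
      simp only [sublevel, Finset.mem_inter, Finset.mem_filter, Finset.mem_univ, true_and]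
      tauto
  refine ⟨?_, hsubset, ?_⟩
  · intro h1 _ h2 _ he
    funext m x
    have hx := congrFun he x.1
    rw [combineFam_eval Ss hdisj h1 x.2, combineFam_eval Ss hdisj h2 x.2] at hx
    exact hx
  · ext g
    constructor
    · rintro ⟨h, hh, rfl⟩
      exact ⟨htotal h hh, hineq h hh⟩
    · rintro ⟨hgsum, hgle⟩
      set h : (m : Fin k) → {i // i ∈ Ss m} → ℝ := fun m x => g x.1 with hhdef
      have hcomb : combineFam Ss h = g :=
        funext fun i => combineFam_eval Ss hdisj h (hσmem i)
      refine ⟨h, ?_, hcomb⟩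
      intro m
      -- sums over subsets of Ss m
      have hS : ∀ (P : I → Prop) [DecidablePred P],
          (∑ x ∈ (Ss m).attach.filter (fun x => P x.1), h m x)
            = ∑ i ∈ (Ss m).filter P, g i := by
        intro P _
        exact sum_attach_filter_eq (Ss m) P (h m) g (fun i hi => rfl)
      -- the key test sets
      have hkey : ∀ B : Finset I, B ⊆ Ss m →
          (∃ jB : ℕ, B = (Ss m).filter (fun i => f i < jB)) →
          (∑ i ∈ B, g i) + ((∑ m', (z m' (Ss m') : ℝ)) - ∑ i ∈ Ss m, g i)
            ≤ (z m B : ℝ) + ((∑ m', (z m' (Ss m') : ℝ)) - (z m (Ss m) : ℝ)) := by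
        intro B hB hBform
        obtain ⟨jB, hjB⟩ := hBform
        have hAdef : ∀ m' : Fin k,
            (B ∪ (Finset.univ \ Ss m)) ∩ Ss m'
              = if m' = m then B else Ss m' := by
          intro m'
          by_cases hm' : m' = m
          · subst hm'
            rw [if_pos rfl]
            ext i
            simp only [Finset.mem_inter, Finset.mem_union, Finset.mem_sdiff,
              Finset.mem_univ, true_and]
            constructor
            · rintro ⟨hi | hi, hm⟩
              · exact hi
              · exact absurd hm hi
            · intro hi; exact ⟨Or.inl hi, hB hi⟩
          · rw [if_neg hm']
            ext i
            simp only [Finset.mem_inter, Finset.mem_union, Finset.mem_sdiff,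
              Finset.mem_univ, true_and]
            constructor
            · rintro ⟨_, hi⟩; exact hi
            · intro hi
              exact ⟨Or.inr (Finset.disjoint_left.mp (hdisj m' m hm') hi), hi⟩
        have hcond : ∀ m', ∃ j : ℕ,
            (B ∪ (Finset.univ \ Ss m)) ∩ Ss m' = (Ss m').filter (fun i => f i < j) := by
          intro m'
          by_cases hm' : m' = m
          · exact ⟨jB, by rw [hm', hAdef m, if_pos rfl, hjB]⟩
          · refine ⟨N, ?_⟩
            rw [hAdef m', if_neg hm', Finset.filter_true_of_mem fun i _ => hfN i]
        have hle := hgle _ hcond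
        have hbf : (bfFamUnion Ss z (B ∪ (Finset.univ \ Ss m)) : ℤ)
            = z m B + ((∑ m', z m' (Ss m')) - z m (Ss m)) := by
          unfold bfFamUnion
          have : ∀ m' ∈ Finset.univ, z m' ((B ∪ (Finset.univ \ Ss m)) ∩ Ss m')
              = z m' (Ss m') + (if m' = m then z m B - z m (Ss m) else 0) := by
            intro m' _
            rw [hAdef m']
            by_cases hm' : m' = m
            · subst hm'; rw [if_pos rfl, if_pos rfl]; ring
            · rw [if_neg hm', if_neg hm']; ring
          rw [Finset.sum_congr rfl this, Finset.sum_add_distrib,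
            Finset.sum_ite_eq' Finset.univ m (fun _ => z m B - z m (Ss m)),
            if_pos (Finset.mem_univ m)]
          ring
        have hdisjB : Disjoint B (Finset.univ \ Ss m) :=
          Finset.sdiff_disjoint.symm.mono_left hB
        rw [Finset.sum_union hdisjB,
          Finset.sum_sdiff_eq_sub (Finset.subset_univ (Ss m)), hgsum, hbf] at hle
        push_cast at hle ⊢
        linarith
      -- equality of total sums over Ss m
      have hempty : (∅ : Finset I) = (Ss m).filter (fun i => f i < 0) := by
        symm
        exact Finset.filter_eq_empty_iff.mpr fun _ _ => by omega
      have hge : (z m (Ss m) : ℝ) ≤ ∑ i ∈ Ss m, g i := by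
        have := hkey ∅ (Finset.empty_subset _) ⟨0, hempty⟩
        rw [Finset.sum_empty, hz m] at this
        push_cast at this
        linarith
      have hle1 : (∑ i ∈ Ss m, g i) ≤ (z m (Ss m) : ℝ) := by
        have hcond : ∀ m', ∃ j : ℕ,
            Ss m ∩ Ss m' = (Ss m').filter (fun i => f i < j) := by
          intro m'
          by_cases hm' : m' = m
          · exact ⟨N, by rw [hm', Finset.inter_self,
              Finset.filter_true_of_mem fun i _ => hfN i]⟩
          · refine ⟨0, ?_⟩
            rw [Finset.disjoint_iff_inter_eq_empty.mp
              (hdisj m m' fun e => hm' e.symm)]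
            exact (Finset.filter_eq_empty_iff.mpr fun _ _ => by omega).symm
        have hle := hgle (Ss m) hcond
        have hbf : (bfFamUnion Ss z (Ss m) : ℤ) = z m (Ss m) := by
          unfold bfFamUnion
          rw [Finset.sum_eq_single m]
          · rw [Finset.inter_self]
          · intro m' _ hm'
            rw [Finset.disjoint_iff_inter_eq_empty.mp
              (hdisj m m' fun e => hm' e.symm), hz m']
          · intro hm; exact absurd (Finset.mem_univ m) hm
        rw [hbf] at hle
        exact hle
      have heqm : (∑ i ∈ Ss m, g i) = (z m (Ss m) : ℝ) := le_antisymm hle1 hge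
      constructor
      · exact (Finset.sum_attach (Ss m) g).trans heqm
      · intro j
        have hb := hS (fun i => f i < j)
        have hfin := hkey ((Ss m).filter (fun i => f i < j))
          (Finset.filter_subset _ _) ⟨j, rfl⟩
        have hle2 : (∑ i ∈ (Ss m).filter (fun i => f i < j), g i)
            ≤ (z m ((Ss m).filter (fun i => f i < j)) : ℝ) := by
          push_cast at hfin ⊢
          linarith
        calc (∑ x ∈ (Ss m).attach.filter (fun x => f x.1 < j), h m x)
            = ∑ i ∈ (Ss m).filter (fun i => f i < j), g i := hb
          _ ≤ _ := hle2
end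

section
/- Let z be a Boolean function on a finite set I and H = (A₁,…,A_ℓ) a composition of I with initial segments Ā_j. Let E := { h ∈ ℝ^I : Σ_{i∈Ā_j} hᵢ = z(Ā_j) for all 1 ≤ j ≤ ℓ }. Then E is a nonempty affine subspace contained in the plate [[H]]_z, every affine subspace of ℝ^I contained in [[H]]_z has direction space contained in the direction space { v ∈ ℝ^I : Σ_{i∈Ā_j} vᵢ = 0 for all 1 ≤ j ≤ ℓ } of E, and consequently E is an affine subspace of maximal dimension contained in [[H]]_z (the maximal affine subspace of the plate). -/
/-- `E = {h : ∑_{i ∈ Ā_j} hᵢ = z (Ā_j) for all j}`, the locus where all the plate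
inequalities hold with equality. -/
def maxAff {I : Type*} [Fintype I] (f : I → ℕ) (z : Finset I → ℤ) : Set (I → ℝ) :=
  {h | ∀ j : ℕ, (∑ i ∈ sublevel f j, h i) = (z (sublevel f j) : ℝ)}

section Aux

variable {I : Type*} [Fintype I] [DecidableEq I]

/-- The explicit point of `maxAff`, spreading the increment of `z` uniformly on each block. -/
noncomputable def basePoint (f : I → ℕ) (z : Finset I → ℤ) : I → ℝ :=
  fun i => ((z (sublevel f (f i + 1)) : ℝ) - z (sublevel f (f i))) /
    (Finset.univ.filter (fun k => f k = f i)).card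

lemma sublevel_succ (f : I → ℕ) (j : ℕ) :
    sublevel f (j + 1) = sublevel f j ∪ Finset.univ.filter (fun k => f k = j) := by
  ext i
  simp only [sublevel, Finset.mem_filter, Finset.mem_union, Finset.mem_univ, true_and]
  omega

lemma sublevel_disj (f : I → ℕ) (j : ℕ) :
    Disjoint (sublevel f j) (Finset.univ.filter (fun k => f k = j)) := by
  rw [Finset.disjoint_left]
  intro a ha hb
  simp only [sublevel, Finset.mem_filter, Finset.mem_univ, true_and] at ha hb
  omega

lemma sublevel_top (f : I → ℕ) : sublevel f (Finset.univ.sup f + 1) = Finset.univ := by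
  ext i
  simp only [sublevel, Finset.mem_filter, Finset.mem_univ, true_and, iff_true]
  exact Nat.lt_succ_of_le (Finset.le_sup (Finset.mem_univ i))

lemma basePoint_mem (f : I → ℕ) (z : Finset I → ℤ) (hz : z ∅ = 0) :
    basePoint f z ∈ maxAff f z := by
  intro j
  induction j with
  | zero => simp [sublevel, hz]
  | succ j ih =>
    rw [sublevel_succ, Finset.sum_union (sublevel_disj f j), ih]
    rcases (Finset.univ.filter (fun k => f k = j)).eq_empty_or_nonempty with he | hne
    · rw [he, Finset.sum_empty, add_zero, Finset.union_empty]
    · have hcard : ((Finset.univ.filter (fun k => f k = j)).card : ℝ) ≠ 0 := by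
        simp [Finset.card_eq_zero, hne.ne_empty]
      have hsum : ∑ i ∈ Finset.univ.filter (fun k => f k = j), basePoint f z i
          = (z (sublevel f (j + 1)) : ℝ) - z (sublevel f j) := by
        have : ∀ i ∈ Finset.univ.filter (fun k => f k = j),
            basePoint f z i = ((z (sublevel f (j + 1)) : ℝ) - z (sublevel f j)) /
              (Finset.univ.filter (fun k => f k = j)).card := by
          intro i hi
          simp only [Finset.mem_filter, Finset.mem_univ, true_and] at hi
          simp [basePoint, hi]
        rw [Finset.sum_congr rfl this, Finset.sum_const, nsmul_eq_mul,
          mul_div_cancel₀ _ hcard]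
      rw [← sublevel_succ, hsum]; ring

/-- `maxAff` as an affine subspace. -/
noncomputable def Esub (f : I → ℕ) (z : Finset I → ℤ) : AffineSubspace ℝ (I → ℝ) where
  carrier := maxAff f z
  smul_vsub_vadd_mem' := by
    intro c p₁ p₂ p₃ h₁ h₂ h₃ j
    have hpt : ∀ x, (c • (p₁ -ᵥ p₂) +ᵥ p₃) x = c * (p₁ x - p₂ x) + p₃ x := fun x => rfl
    have : ∑ i ∈ sublevel f j, (c • (p₁ -ᵥ p₂) +ᵥ p₃) i
        = c * ((∑ i ∈ sublevel f j, p₁ i) - ∑ i ∈ sublevel f j, p₂ i)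
          + ∑ i ∈ sublevel f j, p₃ i := by
      simp only [hpt, Finset.sum_add_distrib, mul_sub, Finset.sum_sub_distrib,
        ← Finset.mul_sum]
    show ∑ i ∈ sublevel f j, (c • (p₁ -ᵥ p₂) +ᵥ p₃) i = (z (sublevel f j) : ℝ)
    rw [this, h₁ j, h₂ j, h₃ j]
    ring

lemma coe_Esub (f : I → ℕ) (z : Finset I → ℤ) : (Esub f z : Set (I → ℝ)) = maxAff f z := rfl

lemma span_maxAff (f : I → ℕ) (z : Finset I → ℤ) :
    affineSpan ℝ (maxAff f z) = Esub f z := by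
  rw [← coe_Esub, AffineSubspace.affineSpan_coe]

lemma forall_smul_le_zero {a C : ℝ} (h : ∀ t : ℝ, t * a ≤ C) : a = 0 := by
  by_contra ha
  have := h ((C + 1) / a)
  rw [div_mul_cancel₀ _ ha] at this
  linarith

end Aux

/-- `E` is a nonempty affine subspace contained in `[[H]]_z`, its direction space is
`{v : ∑_{i ∈ Ā_j} vᵢ = 0 for all j}`, every affine subspace contained in `[[H]]_z`
has direction contained in that of `E`, and consequently `E` is an affine subspace of
maximal dimension contained in the plate. -/
theorem statement15 {I : Type*} [Fintype I] [DecidableEq I]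
    (f : I → ℕ) (hf : IsCompositionOn Set.univ f)
    (z : Finset I → ℤ) (hz : z ∅ = 0) :
    (maxAff f z).Nonempty ∧
    (affineSpan ℝ (maxAff f z) : Set (I → ℝ)) = maxAff f z ∧
    maxAff f z ⊆ plate f z ∧
    (∀ v : I → ℝ, v ∈ (affineSpan ℝ (maxAff f z)).direction ↔
      ∀ j : ℕ, (∑ i ∈ sublevel f j, v i) = 0) ∧
    (∀ W : AffineSubspace ℝ (I → ℝ), (W : Set (I → ℝ)) ⊆ plate f z →
      W.direction ≤ (affineSpan ℝ (maxAff f z)).direction) ∧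
    (∀ W : AffineSubspace ℝ (I → ℝ), (W : Set (I → ℝ)) ⊆ plate f z →
      Module.finrank ℝ W.direction ≤
        Module.finrank ℝ (affineSpan ℝ (maxAff f z)).direction) := by
  have hbp := basePoint_mem f z hz
  have hne : (maxAff f z).Nonempty := ⟨_, hbp⟩
  have hspan := span_maxAff f z
  -- direction characterization
  have hdir : ∀ v : I → ℝ, v ∈ (affineSpan ℝ (maxAff f z)).direction ↔
      ∀ j : ℕ, (∑ i ∈ sublevel f j, v i) = 0 := by
    intro v
    rw [hspan]
    constructor
    · intro hv j
      have hmem : v +ᵥ basePoint f z ∈ Esub f z :=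
        AffineSubspace.vadd_mem_of_mem_direction hv hbp
      have h1 := hmem j
      have h2 := hbp j
      simp only [Pi.vadd_apply, vadd_eq_add, Pi.add_apply, Finset.sum_add_distrib] at h1
      linarith
    · intro hv
      have hmem : v + basePoint f z ∈ Esub f z := by
        intro j
        show ∑ i ∈ sublevel f j, (v + basePoint f z) i = (z (sublevel f j) : ℝ)
        simp only [Pi.add_apply, Finset.sum_add_distrib, hv j, hbp j, zero_add]
      have : (v + basePoint f z) -ᵥ basePoint f z ∈ (Esub f z).direction :=
        AffineSubspace.vsub_mem_direction hmem hbp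
      simpa using this
  -- maxAff ⊆ plate
  have hsub : maxAff f z ⊆ plate f z := by
    intro h hh
    refine ⟨?_, fun j => le_of_eq (hh j)⟩
    have := hh (Finset.univ.sup f + 1)
    rwa [sublevel_top] at this
  -- direction maximality
  have hmax : ∀ W : AffineSubspace ℝ (I → ℝ), (W : Set (I → ℝ)) ⊆ plate f z →
      W.direction ≤ (affineSpan ℝ (maxAff f z)).direction := by
    intro W hW v hv
    rw [hdir]
    intro j
    rcases (W : Set (I → ℝ)).eq_empty_or_nonempty with he | ⟨p, hp⟩
    · have : W = ⊥ := by
        rw [← AffineSubspace.coe_eq_bot_iff]; exact he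
      rw [this, AffineSubspace.direction_bot, Submodule.mem_bot] at hv
      simp [hv]
    · have key : ∀ t : ℝ, t * (∑ i ∈ sublevel f j, v i)
          ≤ (z (sublevel f j) : ℝ) - ∑ i ∈ sublevel f j, p i := by
        intro t
        have hmem : t • v +ᵥ p ∈ W :=
          AffineSubspace.vadd_mem_of_mem_direction (Submodule.smul_mem _ t hv) hp
        have := (hW hmem).2 j
        simp only [Pi.vadd_apply, Pi.smul_apply, Pi.add_apply, vadd_eq_add, smul_eq_mul,
          Finset.sum_add_distrib, Finset.mul_sum] at this
        rw [Finset.mul_sum]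
        linarith
      exact forall_smul_le_zero key
  refine ⟨hne, ?_, hsub, hdir, hmax, ?_⟩
  · rw [hspan, coe_Esub]
  · intro W hW
    exact Submodule.finrank_mono (hmax W hW)
end

section
/- (Plate face factorization.) Let I = S₁ ⊔ … ⊔ S_k be a finite set with each S_m nonempty, let S̄_m := S₁ ∪ … ∪ S_m, let z be a Boolean function on I, and let K_m be a composition of S_m for each m. Define Boolean functions z_m on S_m by z_m(A) := z(S̄_{m−1} ∪ A) − z(S̄_{m−1}). Then the combining map ℝ^{S₁} × … × ℝ^{S_k} → ℝ^I restricts to a bijection from [[K₁]]_{z₁} × … × [[K_k]]_{z_k} onto [[K₁;…;K_k]]_z ∩ { h ∈ ℝ^I : Σ_{i∈S_m} hᵢ = z(S̄_m) − z(S̄_{m−1}) for all 1 ≤ m ≤ k }, where K₁;…;K_k is the concatenated composition of I. -/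
/-- The initial union `S̄_m = S₁ ∪ ⋯ ∪ S_m` (0-indexed: the union of the blocks of
index `< m`). -/
def Sbar {I : Type*} [DecidableEq I] {k : ℕ} (Ss : Fin k → Finset I) (m : ℕ) :
    Finset I :=
  (Finset.univ.filter (fun m' : Fin k => (m' : ℕ) < m)).biUnion Ss

section Aux
variable {I : Type*} [DecidableEq I] {k : ℕ} {Ss : Fin k → Finset I}

lemma combine_apply (hdisj : ∀ m m' : Fin k, m ≠ m' → Disjoint (Ss m) (Ss m'))
    (h : (m : Fin k) → {i // i ∈ Ss m} → ℝ) {m : Fin k} {i : I} (hi : i ∈ Ss m) :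
    combineFam Ss h i = h m ⟨i, hi⟩ := by
  unfold combineFam
  rw [Finset.sum_eq_single m]
  · rw [dif_pos hi]
  · intro m' _ hne
    rw [dif_neg]
    exact fun hi' => Finset.disjoint_left.mp (hdisj m' m hne) hi' hi
  · simp

lemma Sbar_zero : Sbar Ss 0 = ∅ := by simp [Sbar]

lemma Sbar_succ' {n : ℕ} (hn : n < k) :
    Sbar Ss (n + 1) = Sbar Ss n ∪ Ss ⟨n, hn⟩ := by
  ext i
  simp only [Sbar, Finset.mem_biUnion, Finset.mem_filter, Finset.mem_univ, true_and,
    Finset.mem_union, Nat.lt_succ_iff_lt_or_eq]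
  constructor
  · rintro ⟨m', hm' | hm', hi⟩
    · exact Or.inl ⟨m', hm', hi⟩
    · exact Or.inr (by rwa [show m' = ⟨n, hn⟩ from Fin.ext hm'] at hi)
  · rintro (⟨m', hm', hi⟩ | hi)
    · exact ⟨m', Or.inl hm', hi⟩
    · exact ⟨⟨n, hn⟩, Or.inr rfl, hi⟩

lemma Sbar_succ (m : Fin k) : Sbar Ss ((m : ℕ) + 1) = Sbar Ss m ∪ Ss m :=
  Sbar_succ' m.isLt

lemma disj_Sbar (hdisj : ∀ m m' : Fin k, m ≠ m' → Disjoint (Ss m) (Ss m'))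
    {n : ℕ} (hn : n < k) : Disjoint (Sbar Ss n) (Ss ⟨n, hn⟩) := by
  rw [Finset.disjoint_left]
  intro i hi hi'
  simp only [Sbar, Finset.mem_biUnion, Finset.mem_filter, Finset.mem_univ, true_and] at hi
  obtain ⟨m', hm', him'⟩ := hi
  exact Finset.disjoint_left.mp (hdisj m' ⟨n, hn⟩ (by simp [Fin.ext_iff, hm'.ne])) him' hi'

lemma Sbar_top [Fintype I] (hcover : ∀ i : I, ∃ m, i ∈ Ss m) :
    Sbar Ss k = Finset.univ := by
  ext i
  simp only [Sbar, Finset.mem_biUnion, Finset.mem_filter, Finset.mem_univ, true_and, iff_true]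
  obtain ⟨m, hm⟩ := hcover i
  exact ⟨m, m.isLt, hm⟩

lemma telescope (hdisj : ∀ m m' : Fin k, m ≠ m' → Disjoint (Ss m) (Ss m'))
    {z : Finset I → ℤ} (hz : z ∅ = 0) (H : I → ℝ)
    (hH : ∀ m : Fin k, (∑ i ∈ Ss m, H i) =
      ((z (Sbar Ss ((m : ℕ) + 1)) - z (Sbar Ss (m : ℕ)) : ℤ) : ℝ)) :
    ∀ n, n ≤ k → (∑ i ∈ Sbar Ss n, H i) = (z (Sbar Ss n) : ℝ) := by
  intro n
  induction n with
  | zero => intro _; simp [Sbar_zero (Ss := Ss), hz]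
  | succ n ih =>
    intro hn
    have hn' : n < k := hn
    rw [Sbar_succ' hn', Finset.sum_union (disj_Sbar hdisj hn'), ih hn'.le,
      hH ⟨n, hn'⟩]
    push_cast
    rw [← Sbar_succ' hn']
    ring

lemma sum_filter_attach (S : Finset I) (P : I → Prop) [DecidablePred P] (g : I → ℝ) :
    (∑ i ∈ S.attach.filter (fun i => P i.1), g i.1) = ∑ i ∈ S.filter P, g i := by
  rw [Finset.sum_filter, Finset.sum_filter,
    Finset.sum_attach S (fun i => if P i then g i else 0)]

end Aux

/-- Plate face factorization: for `I = S₁ ⊔ ⋯ ⊔ S_k`, a Boolean function `z` on `I`,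
compositions `K_m` of `S_m` (encoded by `K m`), and `z_m (A) = z (S̄_{m-1} ∪ A) − z (S̄_{m-1})`,
the combining map restricts to a bijection from `[[K₁]]_{z₁} × ⋯ × [[K_k]]_{z_k}` onto
`[[K₁;…;K_k]]_z ∩ {h : ∑_{i ∈ S_m} hᵢ = z (S̄_m) − z (S̄_{m−1}) for all m}`, where the
plate of the concatenation `K₁;…;K_k` is cut out by the inequalities at its initial
segments `S̄_{m-1} ∪ (initial segment of K_m)`. -/
theorem statement17 {I : Type*} [Fintype I] [DecidableEq I] {k : ℕ}
    (Ss : Fin k → Finset I) (hSne : ∀ m, (Ss m).Nonempty)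
    (hdisj : ∀ m m' : Fin k, m ≠ m' → Disjoint (Ss m) (Ss m'))
    (hcover : ∀ i : I, ∃ m, i ∈ Ss m)
    (z : Finset I → ℤ) (hz : z ∅ = 0)
    (K : Fin k → I → ℕ) (hK : ∀ m, IsCompositionOn (↑(Ss m) : Set I) (K m)) :
    Set.BijOn (combineFam Ss)
      {h | ∀ m, h m ∈ plateOn (Ss m) (K m)
        (fun A => z (Sbar Ss (m : ℕ) ∪ A) - z (Sbar Ss (m : ℕ)))}
      ({h : I → ℝ | (∑ i, h i) = (z Finset.univ : ℝ) ∧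
          ∀ (m : Fin k) (j : ℕ),
            (∑ i ∈ Sbar Ss (m : ℕ) ∪ (Ss m).filter (fun i => K m i < j), h i) ≤
              (z (Sbar Ss (m : ℕ) ∪ (Ss m).filter (fun i => K m i < j)) : ℝ)} ∩
        {h : I → ℝ | ∀ m : Fin k,
          (∑ i ∈ Ss m, h i) =
            ((z (Sbar Ss ((m : ℕ) + 1)) - z (Sbar Ss (m : ℕ)) : ℤ) : ℝ)}) := by
  refine ⟨?_, ?_, ?_⟩
  · -- MapsTo
    intro h hh
    have perblock : ∀ m : Fin k, (∑ i ∈ Ss m, combineFam Ss h i) =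
        ((z (Sbar Ss ((m : ℕ) + 1)) - z (Sbar Ss (m : ℕ)) : ℤ) : ℝ) := by
      intro m
      have h1 : (∑ i ∈ Ss m, combineFam Ss h i) = ∑ i ∈ (Ss m).attach, h m i := by
        rw [← Finset.sum_attach (Ss m) (combineFam Ss h)]
        exact Finset.sum_congr rfl fun i _ => combine_apply hdisj h i.2
      rw [h1, (hh m).1, Sbar_succ m]
    have tele := telescope hdisj hz (combineFam Ss h) perblock
    refine ⟨⟨?_, ?_⟩, perblock⟩
    · have := tele k le_rfl
      rwa [Sbar_top hcover] at this
    · intro m j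
      have hsub : (Ss m).filter (fun i => K m i < j) ⊆ Ss m := Finset.filter_subset _ _
      have hd : Disjoint (Sbar Ss (m : ℕ)) ((Ss m).filter (fun i => K m i < j)) :=
        (disj_Sbar hdisj m.isLt).mono_right (by simpa using hsub)
      rw [Finset.sum_union hd]
      have e1 : (∑ i ∈ (Ss m).filter (fun i => K m i < j), combineFam Ss h i) =
          ∑ i ∈ (Ss m).attach.filter (fun i => K m i.1 < j), h m i := by
        rw [← sum_filter_attach (Ss m) (fun i => K m i < j) (combineFam Ss h)]
        refine Finset.sum_congr rfl fun i _ => combine_apply hdisj h i.2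
      have h2 := (hh m).2 j
      have h3 := tele (m : ℕ) m.isLt.le
      rw [e1, h3]
      push_cast at h2 ⊢
      linarith
  · -- InjOn
    intro h1 _ h2 _ heq
    funext m
    funext i
    have := congrFun heq i.1
    rwa [combine_apply hdisj h1 i.2, combine_apply hdisj h2 i.2] at this
  · -- SurjOn
    intro H hH
    obtain ⟨⟨htot, hineq⟩, hper⟩ := hH
    refine ⟨fun m i => H i.1, ?_, ?_⟩
    · intro m
      have tele := telescope hdisj hz H hper
      constructor
      · rw [Finset.sum_attach (Ss m) H, hper m, Sbar_succ m]
      · intro j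
        rw [show (fun i : {i // i ∈ Ss m} => H i.1) = (fun i => H i.1) from rfl]
        rw [sum_filter_attach (Ss m) (fun i => K m i < j) H]
        have hd : Disjoint (Sbar Ss (m : ℕ)) ((Ss m).filter (fun i => K m i < j)) :=
          (disj_Sbar hdisj m.isLt).mono_right (by simpa using Finset.filter_subset _ (Ss m))
        have h2 := hineq m j
        rw [Finset.sum_union hd] at h2
        have h3 := tele (m : ℕ) m.isLt.le
        push_cast
        push_cast at h2
        linarith
    · funext i
      obtain ⟨m, hm⟩ := hcover i
      exact combine_apply hdisj _ hm
end
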